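/- arXiv:1705.07041 — 6 statements merged into one kernel-verified Lean document; each statement's English description precedes it below -/
import Mathlib

section
/- Let n ≥ 1 and let x ∈ ℝⁿ satisfy 0 ≤ x_1 ≤ x_2 ≤ ⋯ ≤ x_n ≤ 1 and Σ_{i=1}^n x_i = 1. Then Σ_{i=1}^n 1/√(x_i + x_{i+1} + ⋯ + x_n) ≤ 2n. -/
/-!
Since `x` is nondecreasing, the mean of a tail is at least the overall mean `1 / n`, so the tail
starting at the `i`-th entry is at least `(n - i) / n`. Hence the sum is at most
`√n * ∑_{k=1}^n 1 / √k`, and telescoping `1 / √k ≤ 2 (√k - √(k - 1))` bounds this by `2n`.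
-/

open Finset Real

lemma one_div_sqrt_add_one_le {a : ℝ} (ha : 0 ≤ a) :
    1 / √(a + 1) ≤ 2 * (√(a + 1) - √a) := by
  have hs : 0 < √(a + 1) := sqrt_pos.mpr (by linarith)
  have hst : √a ≤ √(a + 1) := sqrt_le_sqrt (by linarith)
  have hsq : √(a + 1) ^ 2 - √a ^ 2 = 1 := by
    rw [sq_sqrt (by linarith), sq_sqrt ha]; ring
  rw [div_le_iff₀ hs]
  -- `2 s (s - t) - (s² - t²) = (s - t)²`
  nlinarith [sq_nonneg (√(a + 1) - √a)]

lemma sum_range_one_div_sqrt_succ_le (n : ℕ) :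
    ∑ k ∈ range n, 1 / √(k + 1) ≤ 2 * √n :=
  calc ∑ k ∈ range n, 1 / √(k + 1)
      ≤ ∑ k ∈ range n, 2 * (√((k + 1 : ℕ) : ℝ) - √k) :=
        sum_le_sum fun k _ => by
          simpa only [Nat.cast_succ] using one_div_sqrt_add_one_le k.cast_nonneg
    _ = 2 * √n := by rw [← mul_sum, sum_range_sub (fun k : ℕ => √k), Nat.cast_zero, sqrt_zero,
        sub_zero]

lemma Fin.sum_univ_comp_sub {M : Type*} [AddCommMonoid M] (n : ℕ) (f : ℕ → M) :
    ∑ i : Fin n, f (n - i) = ∑ k ∈ range n, f (k + 1) := by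
  rw [Fin.sum_univ_eq_sum_range (fun i => f (n - i)), ← sum_range_reflect]
  exact sum_congr rfl fun k hk => by
    rw [mem_range] at hk
    congr 1
    omega

lemma Monotone.card_Ici_mul_sum_le {ι : Type*} [LinearOrder ι] [Fintype ι]
    [LocallyFiniteOrderTop ι] {x : ι → ℝ} (hx : Monotone x) (i : ι) :
    #(Ici i) * ∑ j, x j ≤ Fintype.card ι * ∑ j ∈ Ici i, x j := by
  have hind : Monotone fun j => if i ≤ j then (1 : ℝ) else 0 := fun j k hjk => by
    by_cases hij : i ≤ j
    · simp [hij, hij.trans hjk]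
    · simp only [hij, if_false]; split_ifs <;> norm_num
  simpa [mul_comm, ← sum_filter, filter_le_eq_Ici] using
    (hx.monovary hind).sum_mul_sum_le_card_mul_sum

theorem stmt_3_general (n : ℕ) (x : Fin n → ℝ)
    (hmono : Monotone x)
    (hsum : ∑ i, x i = 1) :
    ∑ i, 1 / Real.sqrt (∑ j ∈ Finset.Ici i, x j) ≤ 2 * n := by
  have htail (i : Fin n) : ((n - i : ℕ) : ℝ) ≤ n * ∑ j ∈ Ici i, x j := by
    simpa [hsum] using hmono.card_Ici_mul_sum_le i
  have hterm (i : Fin n) : 1 / √(∑ j ∈ Ici i, x j) ≤ √n * (1 / √((n - i : ℕ) : ℝ)) := by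
    have hn : (0 : ℝ) < n := by exact_mod_cast i.pos
    have hi : (0 : ℝ) < (n - i : ℕ) := by exact_mod_cast Nat.sub_pos_of_lt i.isLt
    calc 1 / √(∑ j ∈ Ici i, x j)
        ≤ 1 / √((n - i : ℕ) / n) := by
          gcongr
          rw [div_le_iff₀' hn]
          exact htail i
      _ = √n * (1 / √((n - i : ℕ) : ℝ)) := by
          rw [sqrt_div hi.le, one_div_div, div_eq_mul_one_div]
  calc ∑ i, 1 / √(∑ j ∈ Ici i, x j)
      ≤ ∑ i : Fin n, √n * (1 / √((n - i : ℕ) : ℝ)) := sum_le_sum fun i _ => hterm i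
    _ = √n * ∑ k ∈ range n, 1 / √(k + 1) := by
        rw [← mul_sum, Fin.sum_univ_comp_sub n fun k => 1 / √(k : ℝ)]
        push_cast
        rfl
    _ ≤ √n * (2 * √n) := by gcongr; exact sum_range_one_div_sqrt_succ_le n
    _ = 2 * n := by rw [mul_left_comm, mul_self_sqrt n.cast_nonneg]

/-- The elementary inequality on sums of reciprocal square roots of tail sums
(Lemma `sumpi` of the paper). -/
theorem stmt_3 (n : ℕ) (hn : 1 ≤ n) (x : Fin n → ℝ)
    (h0 : ∀ i, 0 ≤ x i) (hmono : Monotone x) (h1 : ∀ i, x i ≤ 1)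
    (hsum : ∑ i, x i = 1) :
    ∑ i, 1 / Real.sqrt (∑ j ∈ Finset.Ici i, x j) ≤ 2 * n :=
  stmt_3_general n x hmono hsum
end

section
/- Let S ≥ 1, D > 0, n ≥ 96, ρ ∈ (0,1). Let p̂ ∈ Δ^S be the average of n i.i.d. multinoulli trials with parameter p ∈ Δ^S. Then for any fixed h ∈ [0,D]^S, with probability at least 1 − ρ, |(p̂ − p)ᵀh| ≤ 2·√( log(n/ρ)·Σ_{i=1}^{S−1} γ_i·c_i²/n ) + 3·D·log(n/ρ)/n, where γ_i := p_i·(p_{i+1}+⋯+p_S)/(p_i+⋯+p_S), c_i := h_i − H_{i+1}, and H_{i+1} := (Σ_{j=i+1}^S h_j·p_j)/(Σ_{j=i+1}^S p_j). -/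
/-!
The weighted sum `∑ γᵢ cᵢ²` is exactly the variance of `h` under `p`: with `Tₖ, Bₖ` the mass and
first moment of the tail `{k, …, S}`, the `i`-th term equals `pᵢ hᵢ² - (Bᵢ²/Tᵢ - Bᵢ₊₁²/Tᵢ₊₁)`, and
the sum telescopes. The claim is therefore a two-sided Bernstein inequality for the centred i.i.d.
sum `∑ⱼ (h(Xʲ) - pᵀh)`, whose summands are bounded by `D`. It follows from the Chernoff bound and
the estimate `exp x ≤ 1 + x + x²` for `|x| ≤ 1`, choosing the exponent `λ = t / 2V` or `λ = 1 / D`;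
each tail then has probability at most `ρ / n ≤ ρ / 2`.
-/

open MeasureTheory ProbabilityTheory Finset

noncomputable section

/-- Law of a `Dirichlet(α)` random vector: the law of `(X i / ∑ j, X j) i` where the `X i`
are independent with `X i ~ Gamma (α i) 1`. -/
def dirichletLaw {S : ℕ} (α : Fin S → ℝ) : Measure (Fin S → ℝ) :=
  (Measure.pi fun i => gammaMeasure (α i) 1).map (fun x i => x i / ∑ j, x j)

/-- The categorical (multinoulli) measure on `Fin S` with parameter `p`. -/
def catMeasure {S : ℕ} (p : Fin S → ℝ) : Measure (Fin S) :=
  ∑ i : Fin S, ENNReal.ofReal (p i) • Measure.dirac i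

/-- Joint law of `n` i.i.d. multinoulli trials with parameter `p`. -/
def trialsLaw {S : ℕ} (p : Fin S → ℝ) (n : ℕ) : Measure (Fin n → Fin S) :=
  Measure.pi fun _ : Fin n => catMeasure p

/-- The empirical distribution (the average `p̂` of the `n` multinoulli trials `x`). -/
def empDist {S n : ℕ} (x : Fin n → Fin S) (i : Fin S) : ℝ :=
  ((Finset.univ.filter fun j => x j = i).card : ℝ) / (n : ℝ)

open Real

section Multinoulli

variable {S : ℕ} {p : Fin S → ℝ}

lemma isProbabilityMeasure_catMeasure (hp : p ∈ stdSimplex ℝ (Fin S)) :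
    IsProbabilityMeasure (catMeasure p) := by
  constructor
  simp only [catMeasure, Measure.coe_finsetSum, Finset.sum_apply, Measure.smul_apply,
    measure_univ, smul_eq_mul, mul_one]
  rw [← ENNReal.ofReal_sum_of_nonneg fun i _ => hp.1 i, hp.2, ENNReal.ofReal_one]

lemma integral_catMeasure (hp : ∀ i, 0 ≤ p i) (g : Fin S → ℝ) :
    ∫ i, g i ∂catMeasure p = ∑ i, p i * g i := by
  rw [catMeasure, integral_finsetSum_measure fun i _ => Integrable.of_finite.smul_measure (by simp)]
  refine Finset.sum_congr rfl fun i _ => ?_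
  rw [integral_smul_measure, integral_dirac, ENNReal.toReal_ofReal (hp i), smul_eq_mul]

lemma sum_empDist_mul {n : ℕ} (x : Fin n → Fin S) (g : Fin S → ℝ) :
    ∑ i, empDist x i * g i = (∑ j, g (x j)) / n := by
  simp_rw [empDist, div_mul_eq_mul_div, ← Finset.sum_div]
  congr 1
  rw [← Finset.sum_fiberwise_of_maps_to (fun j _ => Finset.mem_univ (x j)) (fun j => g (x j))]
  refine Finset.sum_congr rfl fun i _ => ?_
  rw [Finset.sum_congr rfl fun j hj => by rw [(Finset.mem_filter.1 hj).2], Finset.sum_const,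
    nsmul_eq_mul]

lemma sum_empDist_sub_mul {n : ℕ} (hn : n ≠ 0) (x : Fin n → Fin S) (h : Fin S → ℝ) :
    ∑ i, (empDist x i - p i) * h i = (∑ j, (h (x j) - ∑ i, p i * h i)) / n := by
  simp only [sub_mul, sum_sub_distrib, sum_empDist_mul, sum_const, card_univ, Fintype.card_fin,
    nsmul_eq_mul]
  field_simp

end Multinoulli

section TailVariance

lemma sum_mul_sub_sum_mul_eq_zero {ι : Type*} [Fintype ι] {p : ι → ℝ} (hp : ∑ i, p i = 1)
    (h : ι → ℝ) : ∑ i, p i * (h i - ∑ j, p j * h j) = 0 := by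
  simp only [mul_sub, sum_sub_distrib, ← sum_mul, hp, one_mul, sub_self]

lemma sum_mul_sub_sum_mul_sq {ι : Type*} [Fintype ι] {p : ι → ℝ} (hp : ∑ i, p i = 1)
    (h : ι → ℝ) :
    ∑ i, p i * (h i - ∑ j, p j * h j) ^ 2 = ∑ i, p i * h i ^ 2 - (∑ i, p i * h i) ^ 2 := by
  set μ := ∑ j, p j * h j
  have hexpand : ∀ i, p i * (h i - μ) ^ 2 = p i * h i ^ 2 - 2 * μ * (p i * h i) + μ ^ 2 * p i :=
    fun i => by ring
  simp only [hexpand, sum_add_distrib, sum_sub_distrib, ← mul_sum, hp]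
  ring

lemma abs_sub_sum_mul_le {ι : Type*} [Fintype ι] {p h : ι → ℝ} {D : ℝ}
    (hp : p ∈ stdSimplex ℝ ι) (hh : ∀ i, h i ∈ Set.Icc 0 D) (i : ι) :
    |h i - ∑ j, p j * h j| ≤ D := by
  have hlower : 0 ≤ ∑ j, p j * h j := sum_nonneg fun j _ => mul_nonneg (hp.1 j) (hh j).1
  have hupper : ∑ j, p j * h j ≤ D :=
    (sum_le_sum fun j _ => mul_le_mul_of_nonneg_left (hh j).2 (hp.1 j)).trans_eq
      (by rw [← sum_mul, hp.2, one_mul])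
  exact abs_sub_le_iff.2 ⟨by linarith [(hh i).2], by linarith [(hh i).1]⟩

/-- Adding an atom of mass `a` at `b` to a group of mass `T` and first moment `B` increases
`B² / T` by `a b²` minus the left-hand side. -/
lemma mul_div_mul_sub_div_sq_eq {a b T B : ℝ} (hT : T ≠ 0) (haT : a + T ≠ 0) :
    a * T / (a + T) * (b - B / T) ^ 2 = a * b ^ 2 - ((b * a + B) ^ 2 / (a + T) - B ^ 2 / T) := by
  field_simp
  ring

lemma Fin.sum_castSucc_sub_succ {M : Type*} [AddCommGroup M] {m : ℕ} (G : Fin (m + 1) → M) :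
    ∑ i : Fin m, (G i.castSucc - G i.succ) = G 0 - G (Fin.last m) := by
  have h := (Fin.sum_univ_castSucc G).symm.trans (Fin.sum_univ_succ G)
  rw [Finset.sum_sub_distrib, eq_sub_of_add_eq h]
  abel

lemma Fin.sum_filter_val_lt_last {M : Type*} [AddCommMonoid M] {m : ℕ} (F : Fin (m + 1) → M) :
    ∑ i ∈ univ.filter (fun i : Fin (m + 1) => (i : ℕ) < m), F i = ∑ i : Fin m, F i.castSucc := by
  rw [Finset.sum_filter, Fin.sum_univ_castSucc]
  simp

lemma Fin.Ioi_castSucc_eq_Ici_succ {m : ℕ} (i : Fin m) : Ioi i.castSucc = Ici i.succ := by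
  ext j
  simp [Fin.lt_def, Fin.le_def]

theorem Fin.sum_castSucc_tail_terms {m : ℕ} (p h : Fin (m + 1) → ℝ)
    (htail : ∀ k, 0 < ∑ j ∈ Ici k, p j) :
    ∑ i : Fin m, p i.castSucc * (∑ j ∈ Ioi i.castSucc, p j) / (∑ j ∈ Ici i.castSucc, p j) *
        (h i.castSucc - (∑ j ∈ Ioi i.castSucc, h j * p j) / ∑ j ∈ Ioi i.castSucc, p j) ^ 2
      = ∑ i, p i * h i ^ 2 - (∑ i, h i * p i) ^ 2 / ∑ i, p i := by
  set G : Fin (m + 1) → ℝ := fun k => (∑ j ∈ Ici k, h j * p j) ^ 2 / ∑ j ∈ Ici k, p j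
  have hstep : ∀ i : Fin m,
      p i.castSucc * (∑ j ∈ Ioi i.castSucc, p j) / (∑ j ∈ Ici i.castSucc, p j) *
          (h i.castSucc - (∑ j ∈ Ioi i.castSucc, h j * p j) / ∑ j ∈ Ioi i.castSucc, p j) ^ 2
        = p i.castSucc * h i.castSucc ^ 2 - (G i.castSucc - G i.succ) := by
    intro i
    have hsucc := htail i.succ
    have hcast := htail i.castSucc
    rw [Ici_eq_cons_Ioi, Finset.sum_cons, Fin.Ioi_castSucc_eq_Ici_succ] at hcast
    simp only [G]
    rw [Ici_eq_cons_Ioi i.castSucc, Finset.sum_cons, Finset.sum_cons,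
      Fin.Ioi_castSucc_eq_Ici_succ]
    exact mul_div_mul_sub_div_sq_eq hsucc.ne' hcast.ne'
  have hlast : G (Fin.last m) = p (Fin.last m) * h (Fin.last m) ^ 2 := by
    have hpos := htail (Fin.last m)
    simp only [G, ← Fin.top_eq_last, Ici_top, Finset.sum_singleton] at hpos ⊢
    field_simp
  rw [Finset.sum_congr rfl fun i _ => hstep i, Finset.sum_sub_distrib,
    Fin.sum_castSucc_sub_succ, hlast, Fin.sum_univ_castSucc (fun i => p i * h i ^ 2)]
  simp only [G, ← bot_eq_zero, Ici_bot]
  ring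

theorem sum_tail_terms_eq_variance {S : ℕ} {p : Fin S → ℝ} (hp : ∑ i, p i = 1)
    (htail : ∀ i : Fin S, (i : ℕ) < S - 1 → 0 < ∑ j ∈ Ioi i, p j) (h : Fin S → ℝ) :
    ∑ i ∈ univ.filter (fun i : Fin S => (i : ℕ) < S - 1),
        (p i * (∑ j ∈ Ioi i, p j) / (∑ j ∈ Ici i, p j)) *
          (h i - (∑ j ∈ Ioi i, h j * p j) / (∑ j ∈ Ioi i, p j)) ^ 2
      = ∑ i, p i * (h i - ∑ j, p j * h j) ^ 2 := by
  rcases S with _ | m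
  · simp
  have htail' : ∀ k, 0 < ∑ j ∈ Ici k, p j := Fin.cases (by simp [← bot_eq_zero, hp])
    fun i => Fin.Ioi_castSucc_eq_Ici_succ i ▸ htail i.castSucc (by simp)
  rw [sum_mul_sub_sum_mul_sq hp, Nat.add_sub_cancel, Fin.sum_filter_val_lt_last,
    Fin.sum_castSucc_tail_terms p h htail', hp, div_one]
  simp_rw [mul_comm (h _)]

end TailVariance

section Bernstein

lemma exp_le_one_add_add_sq {x : ℝ} (hx : |x| ≤ 1) : exp x ≤ 1 + x + x ^ 2 := by
  linarith [le_abs_self (exp x - 1 - x), abs_exp_sub_one_sub_id_le hx]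

lemma exists_bernstein_exponent {V D L n t : ℝ} (hD : 0 < D) (hn : 0 < n)
    (hL : 0 < L) (ht₁ : 2 * √(L * V / n) ≤ t) (ht₂ : 2 * D * L / n ≤ t) :
    ∃ l, 0 ≤ l ∧ l * D ≤ 1 ∧ n * (l ^ 2 * V - l * t) ≤ -L := by
  have ht : 0 < t := lt_of_lt_of_le (by positivity) ht₂
  by_cases hcase : t * D ≤ 2 * V
  · have hVpos : 0 < V := by nlinarith
    refine ⟨t / (2 * V), by positivity,
      by rwa [div_mul_eq_mul_div, div_le_one (by positivity)], ?_⟩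
    have hsq : 4 * (L * V / n) ≤ t ^ 2 := by
      nlinarith [Real.sq_sqrt (by positivity : 0 ≤ L * V / n), Real.sqrt_nonneg (L * V / n)]
    have : 4 * L * V ≤ n * t ^ 2 := by
      rw [mul_div_assoc', div_le_iff₀ hn] at hsq
      linarith
    rw [show n * ((t / (2 * V)) ^ 2 * V - t / (2 * V) * t) = -(n * t ^ 2) / (4 * V) by
      field_simp; ring, div_le_iff₀ (by positivity)]
    linarith
  · refine ⟨1 / D, by positivity, by field_simp; rfl, ?_⟩
    rw [div_le_iff₀ hn] at ht₂
    have : n * ((1 / D) ^ 2 * V - 1 / D * t) * D ^ 2 ≤ -L * D ^ 2 := by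
      field_simp
      nlinarith
    exact le_of_mul_le_mul_right this (by positivity)

variable {α : Type*} [MeasurableSpace α] {ν : Measure α} [IsProbabilityMeasure ν] {f : α → ℝ}
  {D : ℝ}

lemma integrable_of_abs_le (hf : Measurable f) (hfD : ∀ a, |f a| ≤ D) : Integrable f ν :=
  .of_bound hf.aestronglyMeasurable D (ae_of_all _ hfD)

lemma integrable_exp_mul_of_abs_le (hf : Measurable f) (hfD : ∀ a, |f a| ≤ D) (l : ℝ) :
    Integrable (fun a => exp (l * f a)) ν :=
  integrable_of_abs_le (D := exp (|l| * D)) (hf.const_mul l).exp fun a => by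
    rw [abs_of_pos (exp_pos _), exp_le_exp]
    calc l * f a ≤ |l| * |f a| := (le_abs_self _).trans (abs_mul _ _).le
      _ ≤ |l| * D := mul_le_mul_of_nonneg_left (hfD a) (abs_nonneg l)

lemma mgf_le_exp_sq_mul_integral_sq (hf : Measurable f) (hfD : ∀ a, |f a| ≤ D)
    (hmean : ∫ a, f a ∂ν = 0) {l : ℝ} (hl : 0 ≤ l) (hlD : l * D ≤ 1) :
    mgf f ν l ≤ exp (l ^ 2 * ∫ a, f a ^ 2 ∂ν) := by
  have hlf : ∀ a, |l * f a| ≤ 1 := fun a => by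
    rw [abs_mul, abs_of_nonneg hl]
    exact (mul_le_mul_of_nonneg_left (hfD a) hl).trans hlD
  have hint_f : Integrable f ν := integrable_of_abs_le hf hfD
  have hint_sq : Integrable (fun a => f a ^ 2) ν :=
    integrable_of_abs_le (D := D ^ 2) (hf.pow_const 2) fun a => by
      rw [abs_pow]; exact pow_le_pow_left₀ (abs_nonneg _) (hfD a) 2
  have hint_lin : Integrable (fun a => 1 + l * f a) ν :=
    (integrable_const 1).add (hint_f.const_mul l)
  calc mgf f ν l ≤ ∫ a, (1 + l * f a + l ^ 2 * f a ^ 2) ∂ν := by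
        rw [mgf]
        refine integral_mono (integrable_exp_mul_of_abs_le hf hfD l) ?_ fun a => ?_
        · exact hint_lin.add (hint_sq.const_mul _)
        · simpa [mul_pow] using exp_le_one_add_add_sq (hlf a)
    _ = 1 + l ^ 2 * ∫ a, f a ^ 2 ∂ν := by
        rw [integral_add hint_lin (hint_sq.const_mul _),
          integral_add (integrable_const 1) (hint_f.const_mul l), integral_const_mul,
          integral_const_mul, hmean]
        simp
    _ ≤ exp (l ^ 2 * ∫ a, f a ^ 2 ∂ν) := by linarith [add_one_le_exp (l ^ 2 * ∫ a, f a ^ 2 ∂ν)]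

lemma mgf_pi_sum (n : ℕ) (l : ℝ) :
    mgf (fun x : Fin n → α => ∑ j, f (x j)) (Measure.pi fun _ => ν) l = mgf f ν l ^ n := by
  simp only [mgf, Finset.mul_sum, exp_sum]
  simpa using integral_fintype_prod_eq_pow (ι := Fin n) (μ := ν) fun a => exp (l * f a)

lemma measureReal_pi_sum_ge_le {n : ℕ} {l : ℝ} (hl : 0 ≤ l)
    (hint : Integrable (fun a => exp (l * f a)) ν) (ε : ℝ) :
    (Measure.pi fun _ : Fin n => ν).real {x | ε ≤ ∑ j, f (x j)} ≤
      exp (-l * ε) * mgf f ν l ^ n := by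
  rw [← mgf_pi_sum]
  refine measure_ge_le_exp_mul_mgf ε hl ?_
  simpa only [Finset.mul_sum, exp_sum] using Integrable.fintype_prod fun _ : Fin n => hint

theorem measureReal_pi_sum_ge_le_exp_neg {n : ℕ} (hn : 0 < n) (hf : Measurable f) (hD : 0 < D)
    (hfD : ∀ a, |f a| ≤ D) (hmean : ∫ a, f a ∂ν = 0) {L t : ℝ} (hL : 0 < L)
    (ht₁ : 2 * √(L * (∫ a, f a ^ 2 ∂ν) / n) ≤ t) (ht₂ : 2 * D * L / n ≤ t) :
    (Measure.pi fun _ : Fin n => ν).real {x | n * t ≤ ∑ j, f (x j)} ≤ exp (-L) := by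
  obtain ⟨l, hl, hlD, hexp⟩ := exists_bernstein_exponent hD (by positivity) hL ht₁ ht₂
  calc _ ≤ exp (-l * (n * t)) * mgf f ν l ^ n :=
        measureReal_pi_sum_ge_le hl (integrable_exp_mul_of_abs_le hf hfD l) _
    _ ≤ exp (-l * (n * t)) * exp (l ^ 2 * ∫ a, f a ^ 2 ∂ν) ^ n := by
        gcongr
        · exact mgf_nonneg
        · exact mgf_le_exp_sq_mul_integral_sq hf hfD hmean hl hlD
    _ = exp (n * (l ^ 2 * (∫ a, f a ^ 2 ∂ν) - l * t)) := by
        rw [← exp_nat_mul, ← exp_add]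
        ring_nf
    _ ≤ exp (-L) := exp_le_exp.2 hexp

theorem one_sub_two_exp_neg_le_measureReal_pi_abs_sum_le {n : ℕ} (hn : 0 < n)
    (hf : Measurable f) (hD : 0 < D) (hfD : ∀ a, |f a| ≤ D) (hmean : ∫ a, f a ∂ν = 0)
    {L t : ℝ} (hL : 0 < L) (ht₁ : 2 * √(L * (∫ a, f a ^ 2 ∂ν) / n) ≤ t)
    (ht₂ : 2 * D * L / n ≤ t) :
    1 - 2 * exp (-L) ≤ (Measure.pi fun _ : Fin n => ν).real {x | |∑ j, f (x j)| ≤ n * t} := by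
  set μ := Measure.pi fun _ : Fin n => ν
  have hupper := measureReal_pi_sum_ge_le_exp_neg hn hf hD hfD hmean hL ht₁ ht₂
  have hlower := measureReal_pi_sum_ge_le_exp_neg (f := fun a => -f a) hn hf.neg hD
    (by simpa only [abs_neg] using hfD) (by rw [integral_neg, hmean, neg_zero])
    hL (by simpa only [neg_sq] using ht₁) ht₂
  have hcompl : μ.real {x | |∑ j, f (x j)| ≤ n * t}ᶜ ≤ 2 * exp (-L) := by
    calc _ ≤ μ.real ({x | n * t ≤ ∑ j, f (x j)} ∪ {x | n * t ≤ ∑ j, -f (x j)}) := by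
          refine measureReal_mono fun x hx => ?_
          simp only [Set.mem_compl_iff, Set.mem_ofPred_eq, not_le, lt_abs] at hx
          simp only [Set.mem_union, Set.mem_ofPred_eq, Finset.sum_neg_distrib]
          exact hx.imp le_of_lt le_of_lt
      _ ≤ _ := (measureReal_union_le _ _).trans (by linarith)
  rw [probReal_compl_eq_one_sub (measurableSet_le (by fun_prop) measurable_const)] at hcompl
  linarith

end Bernstein

lemma two_mul_exp_neg_log_div_le {n ρ : ℝ} (hn : 2 ≤ n) (hρ : 0 < ρ) :
    2 * exp (-Real.log (n / ρ)) ≤ ρ := by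
  rw [exp_neg, exp_log (by positivity), inv_div, mul_div_assoc', div_le_iff₀ (by positivity)]
  nlinarith

theorem stmt_10_general (S n : ℕ) (hn : 96 ≤ n) (D ρ : ℝ) (hD : 0 < D)
    (hρ : ρ ∈ Set.Ioo (0 : ℝ) 1)
    (p : Fin S → ℝ) (hp : p ∈ stdSimplex ℝ (Fin S))
    (htail : ∀ i : Fin S, (i : ℕ) < S - 1 → 0 < ∑ j ∈ Finset.Ioi i, p j)
    (h : Fin S → ℝ) (hh : ∀ i, h i ∈ Set.Icc (0 : ℝ) D) :
    ENNReal.ofReal (1 - ρ) ≤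
      trialsLaw p n
        {x | |∑ i, (empDist x i - p i) * h i|
            ≤ 2 * Real.sqrt (Real.log (n / ρ) *
                (∑ i ∈ Finset.univ.filter (fun i : Fin S => (i : ℕ) < S - 1),
                  (p i * (∑ j ∈ Finset.Ioi i, p j) / (∑ j ∈ Finset.Ici i, p j)) *
                    (h i - (∑ j ∈ Finset.Ioi i, h j * p j) /
                      (∑ j ∈ Finset.Ioi i, p j)) ^ 2) / n)
              + 3 * D * Real.log (n / ρ) / n} := by
  have := isProbabilityMeasure_catMeasure hp
  have hn96 : (96 : ℝ) ≤ n := by exact_mod_cast hn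
  rw [trialsLaw, sum_tail_terms_eq_variance hp.2 htail, ← ofReal_measureReal]
  set L := Real.log (n / ρ)
  set V := ∑ i, p i * (h i - ∑ j, p j * h j) ^ 2
  have hL : 0 < L := Real.log_pos ((one_lt_div hρ.1).2 (by linarith [hρ.2]))
  have hconc := one_sub_two_exp_neg_le_measureReal_pi_abs_sum_le (n := n) (ν := catMeasure p)
    (f := fun i => h i - ∑ j, p j * h j) (t := 2 * √(L * V / n) + 3 * D * L / n)
    (by omega) .of_discrete hD (abs_sub_sum_mul_le hp hh)
    (by rw [integral_catMeasure hp.1]; exact sum_mul_sub_sum_mul_eq_zero hp.2 h) hL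
    (by rw [integral_catMeasure hp.1]; exact le_add_of_nonneg_right (by positivity))
    (le_trans (by gcongr; norm_num : 2 * D * L / n ≤ 3 * D * L / n)
      (le_add_of_nonneg_left (by positivity)))
  refine ENNReal.ofReal_le_ofReal ?_
  calc 1 - ρ ≤ 1 - 2 * exp (-L) := by
        linarith [two_mul_exp_neg_log_div_le (by linarith : (2 : ℝ) ≤ n) hρ.1]
    _ ≤ _ := hconc
    _ ≤ _ := measureReal_mono fun x hx => by
        rw [Set.mem_ofPred_eq, sum_empDist_sub_mul (by omega), abs_div, Nat.abs_cast,
          div_le_iff₀ (by positivity), mul_comm]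
        exact hx

/-- Concentration of the empirical distribution against a fixed test vector `h ∈ [0,D]^S`
(Lemma `ConcentrationFixedh` of the paper). -/
theorem stmt_10 (S n : ℕ) (hS : 1 ≤ S) (hn : 96 ≤ n) (D ρ : ℝ) (hD : 0 < D)
    (hρ : ρ ∈ Set.Ioo (0 : ℝ) 1)
    (p : Fin S → ℝ) (hp : p ∈ stdSimplex ℝ (Fin S))
    (htail : ∀ i : Fin S, (i : ℕ) < S - 1 → 0 < ∑ j ∈ Finset.Ioi i, p j)
    (h : Fin S → ℝ) (hh : ∀ i, h i ∈ Set.Icc (0 : ℝ) D) :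
    ENNReal.ofReal (1 - ρ) ≤
      trialsLaw p n
        {x | |∑ i, (empDist x i - p i) * h i|
            ≤ 2 * Real.sqrt (Real.log (n / ρ) *
                (∑ i ∈ Finset.univ.filter (fun i : Fin S => (i : ℕ) < S - 1),
                  (p i * (∑ j ∈ Finset.Ioi i, p j) / (∑ j ∈ Finset.Ici i, p j)) *
                    (h i - (∑ j ∈ Finset.Ioi i, h j * p j) /
                      (∑ j ∈ Finset.Ioi i, p j)) ^ 2) / n)
              + 3 * D * Real.log (n / ρ) / n} :=
  stmt_10_general S n hn D ρ hD hρ p hp htail h hh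
end
end

section
/- Let d ≥ 1 and let P, Q be d×d real matrices with all entries nonnegative, such that every row sum of Q is strictly less than 1. Let E ∈ ℝ^d be a nonnegative vector satisfying E = 𝟏 + P·E (where 𝟏 is the all-ones vector), and suppose Q·E ≤ P·E + δ·𝟏 componentwise for some δ ∈ [0,1). Then I − Q is invertible, (I − Q)^{-1} has all entries nonnegative, and (I − Q)^{-1}·𝟏 ≤ (1/(1−δ))·E componentwise. -/
open Matrix

lemma key_mono (d : ℕ) (hd : 1 ≤ d) (Q : Matrix (Fin d) (Fin d) ℝ)
    (hQ : ∀ i j, 0 ≤ Q i j) (hrow : ∀ i, ∑ j, Q i j < 1)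
    (y : Fin d → ℝ) (hy : ∀ i, 0 ≤ (1 - Q).mulVec y i) : ∀ i, 0 ≤ y i := by
  have hne : (Finset.univ : Finset (Fin d)).Nonempty := by
    simpa [Finset.univ_nonempty_iff] using Fin.pos_iff_nonempty.mp hd
  obtain ⟨i0, -, hi0⟩ := Finset.exists_min_image Finset.univ y hne
  have hmin : ∀ j, y i0 ≤ y j := fun j => hi0 j (Finset.mem_univ j)
  have hmv : (1 - Q).mulVec y i0 = y i0 - ∑ j, Q i0 j * y j := by
    simp [Matrix.sub_mulVec, Matrix.one_mulVec, Matrix.mulVec, dotProduct,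
      sub_mul, Finset.sum_sub_distrib, Matrix.one_apply, ite_mul]
  have h1 : ∑ j, Q i0 j * y i0 ≤ ∑ j, Q i0 j * y j :=
    Finset.sum_le_sum fun j _ => mul_le_mul_of_nonneg_left (hmin j) (hQ i0 j)
  have h2 : (∑ j, Q i0 j) * y i0 ≤ y i0 := by
    have := hy i0
    rw [hmv] at this
    rw [Finset.sum_mul]
    nlinarith [h1]
  have h3 : 0 ≤ y i0 := by nlinarith [hrow i0]
  exact fun i => le_trans h3 (hmin i)

/-- The linear-algebraic core of the diameter bound for the extended MDP
(Lemma `diameter2` of the paper). -/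
theorem stmt_14 (d : ℕ) (hd : 1 ≤ d) (P Q : Matrix (Fin d) (Fin d) ℝ)
    (hP : ∀ i j, 0 ≤ P i j) (hQ : ∀ i j, 0 ≤ Q i j)
    (hrow : ∀ i, ∑ j, Q i j < 1)
    (E : Fin d → ℝ) (hE : ∀ i, 0 ≤ E i)
    (hEeq : ∀ i, E i = 1 + P.mulVec E i)
    (δ : ℝ) (hδ0 : 0 ≤ δ) (hδ1 : δ < 1)
    (hQP : ∀ i, Q.mulVec E i ≤ P.mulVec E i + δ) :
    IsUnit (1 - Q) ∧ (∀ i j, 0 ≤ (1 - Q)⁻¹ i j) ∧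
      ∀ i, (1 - Q)⁻¹.mulVec (fun _ => 1) i ≤ 1 / (1 - δ) * E i := by
  -- invertibility via injectivity
  have hker : ∀ v : Fin d → ℝ, (1 - Q).mulVec v = 0 → v = 0 := by
    intro v hv
    have h1 : ∀ i, 0 ≤ v i := key_mono d hd Q hQ hrow v (fun i => by simp [hv])
    have h2 : ∀ i, 0 ≤ -v i := by
      have := key_mono d hd Q hQ hrow (-v) (fun i => by
        simp [Matrix.mulVec_neg, hv])
      simpa using this
    funext i
    simp only [Pi.zero_apply]
    linarith [h1 i, h2 i]
  have hdet : (1 - Q).det ≠ 0 := by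
    intro h
    obtain ⟨v, hv0, hv⟩ := (Matrix.exists_mulVec_eq_zero_iff).mpr h
    exact hv0 (hker v hv)
  have hunit : IsUnit (1 - Q) := (Matrix.isUnit_iff_isUnit_det _).mpr (isUnit_iff_ne_zero.mpr hdet)
  have hmul : (1 - Q) * (1 - Q)⁻¹ = 1 := Matrix.mul_nonsing_inv _ (isUnit_iff_ne_zero.mpr hdet)
  have hcancel : ∀ b : Fin d → ℝ, (1 - Q).mulVec ((1 - Q)⁻¹.mulVec b) = b := by
    intro b
    rw [Matrix.mulVec_mulVec, hmul, Matrix.one_mulVec]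
  refine ⟨hunit, ?_, ?_⟩
  · intro i j
    have := key_mono d hd Q hQ hrow ((1 - Q)⁻¹.mulVec (Pi.single j 1))
      (fun k => by rw [hcancel, Pi.single_apply]; split <;> norm_num)
    have h2 := this i
    simpa [Matrix.mulVec_single] using h2
  · intro i
    set x := (1 - Q)⁻¹.mulVec (fun _ => 1) with hx
    have hden : 0 < 1 - δ := by linarith
    have hyi : ∀ k, 0 ≤ ((fun k => 1 / (1 - δ) * E k) - x) k := by
      apply key_mono d hd Q hQ hrow
      intro k
      have hEQ : (1 - δ) ≤ ((1 - Q).mulVec E) k := by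
        have := hQP k
        have heq := hEeq k
        simp only [Matrix.sub_mulVec, Matrix.one_mulVec, Pi.sub_apply]
        linarith
      have hsplit : (1 - Q).mulVec ((fun k => 1 / (1 - δ) * E k) - x) k
          = 1 / (1 - δ) * ((1 - Q).mulVec E k) - (1 - Q).mulVec x k := by
        rw [Matrix.mulVec_sub]
        simp only [Pi.sub_apply]
        congr 1
        have : (fun k => 1 / (1 - δ) * E k) = (1 / (1 - δ)) • E := by
          funext k; simp [smul_eq_mul]
        rw [this, Matrix.mulVec_smul]
        simp [smul_eq_mul]
      rw [hsplit, hx, hcancel]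
      have h1 : 1 / (1 - δ) * (1 - δ) ≤ 1 / (1 - δ) * ((1 - Q).mulVec E k) :=
        mul_le_mul_of_nonneg_left hEQ (by positivity)
      rw [one_div_mul_cancel (ne_of_gt hden)] at h1
      linarith
    have := hyi i
    simp only [Pi.sub_apply] at this
    linarith
end

section
/- Let (Z_i)_{i=1}^n be a martingale difference sequence adapted to a filtration (ℱ_i), i.e., E[Z_i | ℱ_{i−1}] = 0 for all i, with |Z_i| ≤ K almost surely. Define M_n := Σ_{i=1}^n Z_i and V_n := Σ_{i=1}^n E[Z_i² | ℱ_{i−1}]. Then for any n ≥ 96 and δ ∈ (0,1), with probability at least 1 − δ, |M_n| ≤ 2·√( V_n·ln(n/δ) ) + 3·K·ln(n/δ). -/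
/-!
For `|t| K ≤ 1/2`, the bound `exp x ≤ 1 + x + 5/8 x²` on `|x| ≤ 1/2` gives
`E[exp (t Z_i) | ℱ_{i-1}] ≤ exp (5/8 t² E[Z_i² | ℱ_{i-1}])`, so `exp (t M_k - 5/8 t² V_k)` is a
supermartingale and Markov's inequality gives `P(t M_n - 5/8 t² V_n ≥ L) ≤ exp (-L) = δ / n` for
`L = log (n / δ)`. Taking `±t` over a geometric grid of `log₄ n + 1` values gives at most `n` such
events. Outside them `|M_n| ≤ 5/8 t V_n + L / t` at every grid point, and some grid point is within
a factor `2` of the optimal `t`, giving `2 √(V_n L)`, or `3 K L` when `V_n ≤ 2 K² L`.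
-/

open MeasureTheory ProbabilityTheory Filter Real

lemma exp_le_one_add_add_five_eighths_mul_sq {x : ℝ} (hx : |x| ≤ 1 / 2) :
    exp x ≤ 1 + x + 5 / 8 * x ^ 2 := by
  have h := Real.exp_bound (hx.trans (by norm_num)) (n := 4) (by norm_num)
  have h4 : |x| ^ 4 = x ^ 4 := by rw [pow_abs, abs_of_nonneg (by positivity)]
  simp only [Finset.sum_range_succ, Finset.sum_range_zero, Nat.factorial, h4] at h
  norm_num at h
  have hx2 : x ^ 2 ≤ 1 / 4 := by nlinarith [sq_abs x, abs_nonneg x]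
  have hx3 : x ^ 3 ≤ 1 / 2 * x ^ 2 := by nlinarith [sq_nonneg x, neg_abs_le x, le_abs_self x]
  nlinarith [(abs_sub_le_iff.1 h).1, sq_nonneg x]

lemma two_le_log_of_eight_le {x : ℝ} (hx : 8 ≤ x) : 2 ≤ log x := by
  rw [le_log_iff_exp_le (by linarith), show (2 : ℝ) = 1 + 1 by norm_num, exp_add]
  nlinarith [exp_one_lt_d9, exp_pos 1]

lemma two_mul_log_four_add_one_le {n : ℕ} (hn : 2 ≤ n) : 2 * (Nat.log 4 n + 1) ≤ n := by
  rcases Nat.eq_zero_or_pos (Nat.log 4 n) with h0 | hpos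
  · omega
  · have hpow : 4 ^ Nat.log 4 n ≤ n := Nat.pow_log_le_self 4 (by omega)
    have hbern : 1 + Nat.log 4 n * 3 ≤ 4 ^ Nat.log 4 n :=
      one_add_mul_le_pow_of_sq_nonneg (a := 3) (Nat.zero_le _) (Nat.zero_le _) (Nat.zero_le _) _
    omega

/-- The hypotheses say `t* / 2 ≤ t ≤ t*` for the minimiser `t* = √(8 L / (5 v))`, and
`√(5 / 8) (r + 1 / r) ≤ 2` for `r ∈ [1 / 2, 2]`. -/
lemma five_eighths_mul_add_div_le_two_sqrt {t L v : ℝ} (ht : 0 < t) (hL : 0 < L)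
    (h₁ : 2 / 5 * (L / t ^ 2) ≤ v) (h₂ : v ≤ 8 / 5 * (L / t ^ 2)) :
    5 / 8 * t * v + L / t ≤ 2 * √(v * L) := by
  set u := t ^ 2 * v
  have hu₁ : 2 / 5 * L ≤ u := by
    have := mul_le_mul_of_nonneg_left h₁ (sq_nonneg t)
    field_simp at this ⊢; linarith
  have hu₂ : u ≤ 8 / 5 * L := by
    have := mul_le_mul_of_nonneg_left h₂ (sq_nonneg t)
    field_simp at this ⊢; linarith
  rw [show 2 * √(v * L) = √(2 ^ 2 * (v * L)) by
    rw [Real.sqrt_mul (by positivity) (v * L), Real.sqrt_sq (by norm_num)]]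
  apply Real.le_sqrt_of_sq_le
  have hexp : (5 / 8 * t * v + L / t) ^ 2 * t ^ 2 = 25 / 64 * u ^ 2 + 5 / 4 * u * L + L ^ 2 := by
    field_simp; ring
  have hq : 25 / 64 * u ^ 2 + 5 / 4 * u * L + L ^ 2 ≤ 2 ^ 2 * (v * L) * t ^ 2 := by
    nlinarith [mul_nonpos_of_nonneg_of_nonpos (by linarith : 0 ≤ u - 2 / 5 * L)
      (by linarith : u - 8 / 5 * L ≤ 0)]
  exact le_of_mul_le_mul_right (hexp.trans_le hq) (pow_pos ht 2)

lemma abs_le_mul_add_div_of_mul_sub_lt {t a c v L : ℝ} (ht : 0 < t)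
    (h₁ : t * a - c * t ^ 2 * v < L) (h₂ : -t * a - c * (-t) ^ 2 * v < L) :
    |a| ≤ c * t * v + L / t := by
  obtain ⟨q, rfl⟩ : ∃ q, L = t * q := ⟨L / t, by field_simp⟩
  rw [mul_div_cancel_left₀ _ ht.ne', abs_le]
  constructor <;> nlinarith

/-- `bernsteinGrid K (k + 1)` satisfies the hypotheses of `five_eighths_mul_add_div_le_two_sqrt`
for `2 K² L 4 ^ k ≤ v ≤ 2 K² L 4 ^ (k + 1)`, and `bernsteinGrid K 0` covers `v ≤ 2 K² L`. -/
noncomputable def bernsteinGrid (K : ℝ) : ℕ → ℝ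
  | 0 => (2 * K)⁻¹
  | k + 1 => (√5 * K * 2 ^ k)⁻¹

section bernsteinGrid

variable {K : ℝ}

lemma bernsteinGrid_pos (hK : 0 < K) (j : ℕ) : 0 < bernsteinGrid K j := by
  cases j <;> simp only [bernsteinGrid] <;> positivity

lemma abs_bernsteinGrid_mul_le (hK : 0 < K) (j : ℕ) : |bernsteinGrid K j| * K ≤ 1 / 2 := by
  rw [abs_of_pos (bernsteinGrid_pos hK j)]
  cases j with
  | zero =>
    rw [bernsteinGrid, inv_mul_le_iff₀ (by positivity)]
    linarith
  | succ k =>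
    rw [bernsteinGrid, inv_mul_le_iff₀ (by positivity)]
    have h5 : 2 ≤ √5 := Real.le_sqrt_of_sq_le (by norm_num)
    have : 2 * 1 ≤ √5 * 2 ^ k :=
      mul_le_mul h5 (one_le_pow₀ (by norm_num)) zero_le_one (by positivity)
    nlinarith

lemma div_bernsteinGrid_succ_sq (L : ℝ) (k : ℕ) :
    L / bernsteinGrid K (k + 1) ^ 2 = 5 * K ^ 2 * L * 4 ^ k := by
  simp only [bernsteinGrid, inv_pow, div_inv_eq_mul, mul_pow,
    Real.sq_sqrt (by norm_num : (0 : ℝ) ≤ 5), ← pow_mul, show (4 : ℝ) = 2 ^ 2 by norm_num]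
  ring

lemma five_eighths_mul_bernsteinGrid_zero_add_div_le {L v : ℝ} (hK : 0 < K) (hL : 0 < L)
    (hv : v ≤ 2 * K ^ 2 * L) :
    5 / 8 * bernsteinGrid K 0 * v + L / bernsteinGrid K 0 ≤ 3 * K * L := by
  have hv' : (2 * K)⁻¹ * v ≤ K * L := by
    rw [inv_mul_le_iff₀ (by positivity)]
    linarith
  rw [bernsteinGrid, div_inv_eq_mul, mul_assoc]
  nlinarith [mul_pos hK hL]

lemma abs_le_of_forall_bernsteinGrid {L v a : ℝ} {n : ℕ} (hK : 0 < K) (hL : 2 ≤ L)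
    (hv : v ≤ n * K ^ 2)
    (h : ∀ j ≤ Nat.log 4 n, |a| ≤ 5 / 8 * bernsteinGrid K j * v + L / bernsteinGrid K j) :
    |a| ≤ 2 * √(v * L) + 3 * K * L := by
  set m := Nat.log 4 n
  have hL0 : 0 < L := by linarith
  have hKL : 0 < 2 * K ^ 2 * L := by positivity
  have hvm : v < 2 * K ^ 2 * L * 4 ^ m := by
    have hn4 : (n : ℝ) < 4 * 4 ^ m := by
      exact_mod_cast pow_succ' 4 m ▸ Nat.lt_pow_succ_log_self (by norm_num) n
    nlinarith [mul_lt_mul_of_pos_right hn4 (pow_pos hK 2),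
      mul_nonneg (mul_nonneg (sub_nonneg.2 hL) (pow_nonneg zero_le_four m)) (sq_nonneg K)]
  rcases le_or_gt v (2 * K ^ 2 * L) with hsmall | hlarge
  · linarith [h 0 (Nat.zero_le _), five_eighths_mul_bernsteinGrid_zero_add_div_le hK hL0 hsmall,
      Real.sqrt_nonneg (v * L)]
  · obtain ⟨k, hk, hk'⟩ := exists_nat_pow_near (x := v / (2 * K ^ 2 * L)) (y := 4)
      ((one_le_div hKL).2 hlarge.le) (by norm_num)
    rw [le_div_iff₀ hKL] at hk
    rw [div_lt_iff₀ hKL] at hk'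
    have hkm : k + 1 ≤ m := by
      by_contra! hmk
      have := pow_le_pow_right₀ (by norm_num : (1 : ℝ) ≤ 4) (Nat.lt_succ_iff.1 hmk)
      nlinarith
    have hbound := five_eighths_mul_add_div_le_two_sqrt (bernsteinGrid_pos hK (k + 1)) hL0
      (v := v) (by rw [div_bernsteinGrid_succ_sq]; linarith)
      (by rw [div_bernsteinGrid_succ_sq]; rw [pow_succ] at hk'; linarith)
    linarith [h (k + 1) hkm, mul_pos hK hL0]

end bernsteinGrid

section Martingale

variable {Ω : Type*} {m m0 : MeasurableSpace Ω} {μ : Measure Ω}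

lemma ae_mul_le_half {X : Ω → ℝ} {K t : ℝ} (hXK : ∀ᵐ ω ∂μ, |X ω| ≤ K) (ht : |t| * K ≤ 1 / 2) :
    ∀ᵐ ω ∂μ, |t * X ω| ≤ 1 / 2 := by
  filter_upwards [hXK] with ω h
  rw [abs_mul]
  exact (mul_le_mul_of_nonneg_left h (abs_nonneg t)).trans ht

lemma ae_mul_sub_condExp_sq_le_half {X : Ω → ℝ} {K t : ℝ} (hXK : ∀ᵐ ω ∂μ, |X ω| ≤ K)
    (ht : |t| * K ≤ 1 / 2) :
    ∀ᵐ ω ∂μ, t * X ω - 5 / 8 * t ^ 2 * μ[fun ω => X ω ^ 2 | m] ω ≤ 1 / 2 := by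
  filter_upwards [ae_mul_le_half hXK ht,
    condExp_nonneg (m := m) (ae_of_all μ fun ω => sq_nonneg (X ω))] with ω h hσ
  have hσ' : 0 ≤ μ[fun ω => X ω ^ 2 | m] ω := hσ
  linarith [le_abs_self (t * X ω), mul_nonneg (by positivity : (0 : ℝ) ≤ 5 / 8 * t ^ 2) hσ']

lemma measure_biUnion_range_union_le {s t : ℕ → Set Ω} {ε : ℝ} (hε : 0 ≤ ε) (N : ℕ)
    (hs : ∀ j, μ (s j) ≤ ENNReal.ofReal ε) (ht : ∀ j, μ (t j) ≤ ENNReal.ofReal ε) :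
    μ (⋃ j ∈ Finset.range N, (s j ∪ t j)) ≤ ENNReal.ofReal (2 * N * ε) := by
  calc μ (⋃ j ∈ Finset.range N, (s j ∪ t j)) ≤ ∑ j ∈ Finset.range N, μ (s j ∪ t j) :=
        measure_biUnion_finset_le _ _
    _ ≤ (Finset.range N).card • (ENNReal.ofReal ε + ENNReal.ofReal ε) :=
        Finset.sum_le_card_nsmul _ _ _ fun j _ =>
          (measure_union_le _ _).trans (add_le_add (hs j) (ht j))
    _ = ENNReal.ofReal (2 * N * ε) := by
        rw [Finset.card_range, nsmul_eq_mul, ← ENNReal.ofReal_add hε hε, ← ENNReal.ofReal_natCast,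
          ← ENNReal.ofReal_mul (by positivity)]
        ring_nf

lemma measure_biUnion_range_log_four_union_le {s t : ℕ → Set Ω} {n : ℕ} (hn : 2 ≤ n) {δ : ℝ}
    (hδ : 0 ≤ δ) (hs : ∀ j, μ (s j) ≤ ENNReal.ofReal (δ / n))
    (ht : ∀ j, μ (t j) ≤ ENNReal.ofReal (δ / n)) :
    μ (⋃ j ∈ Finset.range (Nat.log 4 n + 1), (s j ∪ t j)) ≤ ENNReal.ofReal δ := by
  refine (measure_biUnion_range_union_le (by positivity) _ hs ht).trans
    (ENNReal.ofReal_le_ofReal ?_)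
  have hcount : ((2 * (Nat.log 4 n + 1) : ℕ) : ℝ) ≤ n := by
    exact_mod_cast two_mul_log_four_add_one_le hn
  rw [mul_div_assoc', div_le_iff₀ (by positivity), mul_comm δ]
  push_cast at hcount ⊢
  gcongr

section

variable [IsFiniteMeasure μ]

lemma integrable_exp_of_ae_le {g : Ω → ℝ} {C : ℝ} (hg : AEStronglyMeasurable g μ)
    (hC : ∀ᵐ ω ∂μ, g ω ≤ C) : Integrable (fun ω => exp (g ω)) μ := by
  refine Integrable.of_bound (continuous_exp.comp_aestronglyMeasurable hg) (exp C) ?_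
  filter_upwards [hC] with ω h
  rw [Real.norm_eq_abs, abs_of_pos (exp_pos _)]
  exact exp_le_exp.2 h

lemma integrable_exp_sum {ι : Type*} {f : ι → Ω → ℝ} (s : Finset ι) {C : ℝ}
    (hf : ∀ i ∈ s, AEStronglyMeasurable (f i) μ) (hC : ∀ i ∈ s, ∀ᵐ ω ∂μ, f i ω ≤ C) :
    Integrable (fun ω => exp (∑ i ∈ s, f i ω)) μ := by
  refine integrable_exp_of_ae_le (Finset.aestronglyMeasurable_fun_sum s hf) (C := s.card • C) ?_
  filter_upwards [(eventually_all_finset s).2 hC] with ω h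
  exact Finset.sum_le_card_nsmul s _ C h

lemma integrable_sq_of_abs_le {X : Ω → ℝ} {K : ℝ} (hX : AEStronglyMeasurable X μ)
    (hXK : ∀ᵐ ω ∂μ, |X ω| ≤ K) : Integrable (fun ω => X ω ^ 2) μ := by
  refine Integrable.of_bound (hX.pow 2) (K ^ 2) ?_
  filter_upwards [hXK] with ω h
  rw [Real.norm_eq_abs, abs_pow]
  exact pow_le_pow_left₀ (abs_nonneg _) h 2

lemma condExp_sq_le (hm : m ≤ m0) {X : Ω → ℝ} {K : ℝ}
    (hX : AEStronglyMeasurable X μ) (hXK : ∀ᵐ ω ∂μ, |X ω| ≤ K) :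
    μ[fun ω => X ω ^ 2 | m] ≤ᵐ[μ] fun _ => K ^ 2 := by
  rw [← condExp_const (μ := μ) hm (K ^ 2)]
  refine condExp_mono (integrable_sq_of_abs_le hX hXK) (integrable_const _) ?_
  filter_upwards [hXK] with ω h
  rw [← sq_abs]
  exact pow_le_pow_left₀ (abs_nonneg _) h 2

lemma ae_sum_condExp_sq_le (ℱ : Filtration ℕ m0) {Z : ℕ → Ω → ℝ} {n : ℕ} {K : ℝ}
    (hZ : ∀ i ∈ Finset.Icc 1 n, AEStronglyMeasurable (Z i) μ)
    (hbdd : ∀ i ∈ Finset.Icc 1 n, ∀ᵐ ω ∂μ, |Z i ω| ≤ K) :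
    ∀ᵐ ω ∂μ, ∑ i ∈ Finset.Icc 1 n, μ[fun ω => Z i ω ^ 2 | ℱ (i - 1)] ω ≤ n * K ^ 2 := by
  filter_upwards [(eventually_all_finset _).2 fun i hi =>
    condExp_sq_le (m := ℱ (i - 1)) (ℱ.le _) (hZ i hi) (hbdd i hi)] with ω h
  simpa using Finset.sum_le_card_nsmul _ _ _ h

variable {X : Ω → ℝ} {K t : ℝ}

lemma condExp_exp_mul_le (hm : m ≤ m0) (hX : Integrable X μ) (hXK : ∀ᵐ ω ∂μ, |X ω| ≤ K)
    (hX0 : μ[X | m] =ᵐ[μ] 0) (ht : |t| * K ≤ 1 / 2) :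
    μ[fun ω => exp (t * X ω) | m] ≤ᵐ[μ]
      fun ω => exp (5 / 8 * t ^ 2 * μ[fun ω => X ω ^ 2 | m] ω) := by
  have htX := ae_mul_le_half hXK ht
  have hX2 := integrable_sq_of_abs_le hX.1 hXK
  have hquad_le := condExp_mono (m := m)
    (integrable_exp_of_ae_le (hX.1.const_mul t) (htX.mono fun ω h => (le_abs_self _).trans h))
    (((integrable_const 1).add (hX.smul t)).add (hX2.smul (5 / 8 * t ^ 2)))
    (htX.mono fun ω h => by
      simpa [mul_pow, mul_assoc] using exp_le_one_add_add_five_eighths_mul_sq h)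
  filter_upwards [hquad_le, condExp_add ((integrable_const 1).add (hX.smul t))
      (hX2.smul (5 / 8 * t ^ 2)) m, condExp_add (integrable_const 1) (hX.smul t) m,
    condExp_smul (m := m) (μ := μ) t X, condExp_smul (m := m) (μ := μ) (5 / 8 * t ^ 2)
      (fun ω => X ω ^ 2), hX0] with ω hle h₁ h₂ h₃ h₄ h₀
  refine hle.trans ?_
  simp only [Pi.add_apply, Pi.smul_apply, smul_eq_mul, Pi.zero_apply] at h₁ h₂ h₃ h₄ h₀ ⊢
  rw [h₁, h₂, h₃, h₄, h₀, condExp_const hm, mul_zero, add_zero]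
  linarith [add_one_le_exp (5 / 8 * t ^ 2 * μ[fun ω => X ω ^ 2 | m] ω)]

lemma condExp_exp_mul_sub_le_one (hm : m ≤ m0) (hX : Integrable X μ)
    (hXK : ∀ᵐ ω ∂μ, |X ω| ≤ K) (hX0 : μ[X | m] =ᵐ[μ] 0) (ht : |t| * K ≤ 1 / 2) :
    μ[fun ω => exp (t * X ω - 5 / 8 * t ^ 2 * μ[fun ω => X ω ^ 2 | m] ω) | m] ≤ᵐ[μ] 1 := by
  set σ := μ[fun ω => X ω ^ 2 | m]
  have htX := ae_mul_le_half hXK ht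
  have hσ_meas : StronglyMeasurable[m] fun ω => exp (-(5 / 8 * t ^ 2 * σ ω)) :=
    continuous_exp.comp_stronglyMeasurable (stronglyMeasurable_condExp.const_mul _).neg
  have hsplit : (fun ω => exp (t * X ω - 5 / 8 * t ^ 2 * σ ω)) =
      (fun ω => exp (-(5 / 8 * t ^ 2 * σ ω))) * fun ω => exp (t * X ω) := by
    ext ω
    rw [Pi.mul_apply, ← exp_add, neg_add_eq_sub]
  have hint : Integrable (fun ω => exp (t * X ω - 5 / 8 * t ^ 2 * σ ω)) μ := by
    refine integrable_exp_of_ae_le ((hX.1.const_mul t).sub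
      ((stronglyMeasurable_condExp.mono hm).aestronglyMeasurable.const_mul _)) (C := 1 / 2) ?_
    exact ae_mul_sub_condExp_sq_le_half hXK ht
  rw [hsplit] at hint ⊢
  filter_upwards [condExp_mul_of_stronglyMeasurable_left hσ_meas hint
      (integrable_exp_of_ae_le (hX.1.const_mul t) (htX.mono fun ω h => (le_abs_self _).trans h)),
    condExp_exp_mul_le hm hX hXK hX0 ht] with ω hpull hmgf
  rw [hpull, Pi.mul_apply, Pi.one_apply]
  calc exp (-(5 / 8 * t ^ 2 * σ ω)) * μ[fun ω => exp (t * X ω) | m] ω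
      ≤ exp (-(5 / 8 * t ^ 2 * σ ω)) * exp (5 / 8 * t ^ 2 * σ ω) := by gcongr
    _ = 1 := by rw [← exp_add, neg_add_cancel, exp_zero]

lemma measure_ge_le_exp_neg_of_integral_exp_le_one {g : Ω → ℝ}
    (hg : Integrable (fun ω => exp (g ω)) μ) (hg_le : ∫ ω, exp (g ω) ∂μ ≤ 1) (x : ℝ) :
    μ {ω | x ≤ g ω} ≤ ENNReal.ofReal (exp (-x)) := by
  rw [← ofReal_measureReal]
  refine ENNReal.ofReal_le_ofReal ?_
  calc μ.real {ω | x ≤ g ω} ≤ exp (-1 * x) * mgf g μ 1 :=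
        measure_ge_le_exp_mul_mgf x zero_le_one (by simpa using hg)
    _ ≤ exp (-x) := by
        rw [neg_one_mul]
        exact mul_le_of_le_one_right (exp_pos _).le (by simpa [mgf] using hg_le)

end

section

variable [IsProbabilityMeasure μ]

/-- `exp (∑ i ≤ k, f i)` is a supermartingale started at `1`, by the tower property. -/
lemma integral_exp_sum_le_one (ℱ : Filtration ℕ m0) {f : ℕ → Ω → ℝ} {C : ℝ} (n : ℕ)
    (hf : ∀ i ∈ Finset.Icc 1 n, StronglyMeasurable[ℱ i] (f i))
    (hC : ∀ i ∈ Finset.Icc 1 n, ∀ᵐ ω ∂μ, f i ω ≤ C)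
    (hcond : ∀ i ∈ Finset.Icc 1 n, μ[fun ω => exp (f i ω) | ℱ (i - 1)] ≤ᵐ[μ] 1) :
    ∫ ω, exp (∑ i ∈ Finset.Icc 1 n, f i ω) ∂μ ≤ 1 := by
  induction n with
  | zero => simp
  | succ n ih =>
    have hsub : Finset.Icc 1 n ⊆ Finset.Icc 1 (n + 1) := Finset.Icc_subset_Icc_right n.le_succ
    have hlast : n + 1 ∈ Finset.Icc 1 (n + 1) := by simp
    have hS_meas : StronglyMeasurable[ℱ n] fun ω => exp (∑ i ∈ Finset.Icc 1 n, f i ω) :=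
      continuous_exp.comp_stronglyMeasurable (Finset.stronglyMeasurable_fun_sum _ fun i hi =>
        (hf i (hsub hi)).mono (ℱ.mono (Finset.mem_Icc.1 hi).2))
    have hf' : ∀ i ∈ Finset.Icc 1 (n + 1), AEStronglyMeasurable (f i) μ := fun i hi =>
      ((hf i hi).mono (ℱ.le i)).aestronglyMeasurable
    have hsplit : (fun ω => exp (∑ i ∈ Finset.Icc 1 (n + 1), f i ω)) =
        (fun ω => exp (∑ i ∈ Finset.Icc 1 n, f i ω)) * fun ω => exp (f (n + 1) ω) := by
      ext ω
      rw [Finset.sum_Icc_succ_top (by omega), exp_add, Pi.mul_apply]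
    have hpull := condExp_mul_of_stronglyMeasurable_left (m := ℱ n) hS_meas
      (hsplit ▸ integrable_exp_sum _ hf' hC) (integrable_exp_of_ae_le (hf' _ hlast) (hC _ hlast))
    calc ∫ ω, exp (∑ i ∈ Finset.Icc 1 (n + 1), f i ω) ∂μ
        = ∫ ω, μ[(fun ω => exp (∑ i ∈ Finset.Icc 1 n, f i ω)) * fun ω => exp (f (n + 1) ω)
            | ℱ n] ω ∂μ := by rw [hsplit, integral_condExp (ℱ.le n)]
      _ = ∫ ω, exp (∑ i ∈ Finset.Icc 1 n, f i ω) * μ[fun ω => exp (f (n + 1) ω) | ℱ n] ω ∂μ :=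
          integral_congr_ae hpull
      _ ≤ ∫ ω, exp (∑ i ∈ Finset.Icc 1 n, f i ω) ∂μ := by
          refine integral_mono_of_nonneg ?_
            (integrable_exp_sum _ (fun i hi => hf' i (hsub hi)) fun i hi => hC i (hsub hi)) ?_
          · filter_upwards [condExp_nonneg (m := ℱ n)
              (ae_of_all μ fun ω => (exp_pos (f (n + 1) ω)).le)] with ω h
            exact mul_nonneg (exp_pos _).le h
          · filter_upwards [hcond _ hlast] with ω h
            exact mul_le_of_le_one_right (exp_pos _).le h
      _ ≤ 1 := ih (fun i hi => hf i (hsub hi)) (fun i hi => hC i (hsub hi))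
          fun i hi => hcond i (hsub hi)

theorem measure_ge_le_exp_neg_of_martingaleDifference (ℱ : Filtration ℕ m0) {Z : ℕ → Ω → ℝ}
    {n : ℕ} {K t : ℝ} (hadp : ∀ i ∈ Finset.Icc 1 n, StronglyMeasurable[ℱ i] (Z i))
    (hint : ∀ i ∈ Finset.Icc 1 n, Integrable (Z i) μ)
    (hbdd : ∀ i ∈ Finset.Icc 1 n, ∀ᵐ ω ∂μ, |Z i ω| ≤ K)
    (hmds : ∀ i ∈ Finset.Icc 1 n, μ[Z i | ℱ (i - 1)] =ᵐ[μ] 0) (ht : |t| * K ≤ 1 / 2) (x : ℝ) :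
    μ {ω | x ≤ t * ∑ i ∈ Finset.Icc 1 n, Z i ω
        - 5 / 8 * t ^ 2 * ∑ i ∈ Finset.Icc 1 n, μ[fun ω => Z i ω ^ 2 | ℱ (i - 1)] ω} ≤
      ENNReal.ofReal (exp (-x)) := by
  set f : ℕ → Ω → ℝ := fun i ω => t * Z i ω - 5 / 8 * t ^ 2 * μ[fun ω => Z i ω ^ 2 | ℱ (i - 1)] ω
  have hf : ∀ i ∈ Finset.Icc 1 n, StronglyMeasurable[ℱ i] (f i) := fun i hi =>
    ((hadp i hi).const_mul t).sub
      ((stronglyMeasurable_condExp.mono (ℱ.mono (Nat.sub_le i 1))).const_mul _)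
  have hf_le : ∀ i ∈ Finset.Icc 1 n, ∀ᵐ ω ∂μ, f i ω ≤ 1 / 2 := fun i hi =>
    ae_mul_sub_condExp_sq_le_half (hbdd i hi) ht
  have hsum : ∀ ω, t * ∑ i ∈ Finset.Icc 1 n, Z i ω
      - 5 / 8 * t ^ 2 * ∑ i ∈ Finset.Icc 1 n, μ[fun ω => Z i ω ^ 2 | ℱ (i - 1)] ω =
      ∑ i ∈ Finset.Icc 1 n, f i ω := fun ω => by
    simp only [f, Finset.sum_sub_distrib, Finset.mul_sum]
  simp_rw [hsum]
  exact measure_ge_le_exp_neg_of_integral_exp_le_one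
    (integrable_exp_sum _ (fun i hi => ((hf i hi).mono (ℱ.le i)).aestronglyMeasurable) hf_le)
    (integral_exp_sum_le_one ℱ n hf hf_le fun i hi =>
      condExp_exp_mul_sub_le_one (ℱ.le _) (hint i hi) (hbdd i hi) (hmds i hi) ht) x

lemma ofReal_one_sub_le_measure {S T : Set Ω} {δ : ℝ} (hδ : 0 ≤ δ)
    (hT : μ T ≤ ENNReal.ofReal δ) (hST : ∀ᵐ ω ∂μ, ω ∉ T → ω ∈ S) :
    ENNReal.ofReal (1 - δ) ≤ μ S := by
  rw [ENNReal.ofReal_sub _ hδ, ENNReal.ofReal_one, tsub_le_iff_right]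
  calc 1 = μ Set.univ := measure_univ.symm
    _ ≤ μ (S ∪ T) := measure_mono_ae <| hST.mono fun ω h _ => (em (ω ∈ T)).elim Or.inr (Or.inl ∘ h)
    _ ≤ μ S + μ T := measure_union_le S T
    _ ≤ μ S + ENNReal.ofReal δ := by gcongr

end

end Martingale

/-- Bernstein-type inequality for bounded martingale difference sequences
(Corollary `bim` of the paper). -/
theorem stmt_15 {Ω : Type*} {m0 : MeasurableSpace Ω} (μ : Measure Ω)
    [IsProbabilityMeasure μ] (ℱ : Filtration ℕ m0)
    (n : ℕ) (hn : 96 ≤ n) (K : ℝ) (Z : ℕ → Ω → ℝ)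
    (hadp : ∀ i ∈ Finset.Icc 1 n, StronglyMeasurable[ℱ i] (Z i))
    (hint : ∀ i ∈ Finset.Icc 1 n, Integrable (Z i) μ)
    (hbdd : ∀ i ∈ Finset.Icc 1 n, ∀ᵐ ω ∂μ, |Z i ω| ≤ K)
    (hmds : ∀ i ∈ Finset.Icc 1 n, μ[Z i | ℱ (i - 1)] =ᵐ[μ] (0 : Ω → ℝ))
    (δ : ℝ) (hδ : δ ∈ Set.Ioo (0 : ℝ) 1) :
    ENNReal.ofReal (1 - δ) ≤
      μ {ω | |∑ i ∈ Finset.Icc 1 n, Z i ω|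
          ≤ 2 * Real.sqrt
                ((∑ i ∈ Finset.Icc 1 n, (μ[fun ω' => (Z i ω') ^ 2 | ℱ (i - 1)]) ω)
                  * Real.log (n / δ))
            + 3 * K * Real.log (n / δ)} := by
  obtain ⟨hδ0, hδ1⟩ := hδ
  have hL : 2 ≤ Real.log (n / δ) := two_le_log_of_eight_le <|
    (le_div_self (Nat.cast_nonneg n) hδ0 hδ1.le).trans' (by exact_mod_cast (by omega : 8 ≤ n))
  have hK : 0 ≤ K := by
    obtain ⟨ω, hω⟩ := (hbdd 1 (by simp; omega)).exists
    exact (abs_nonneg _).trans hω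
  rcases hK.eq_or_lt with rfl | hK
  · refine ofReal_one_sub_le_measure (T := ∅) hδ0.le (by simp) ?_
    filter_upwards [(eventually_all_finset _).2 hbdd] with ω hZ _
    rw [Finset.sum_eq_zero fun i hi => abs_nonpos_iff.1 (hZ i hi)]
    simp
  set L := Real.log (n / δ)
  set V := fun ω => ∑ i ∈ Finset.Icc 1 n, μ[fun ω' => Z i ω' ^ 2 | ℱ (i - 1)] ω
  set A : ℝ → Set Ω := fun t => {ω | L ≤ t * ∑ i ∈ Finset.Icc 1 n, Z i ω - 5 / 8 * t ^ 2 * V ω}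
  have hA : ∀ t, |t| * K ≤ 1 / 2 → μ (A t) ≤ ENNReal.ofReal (δ / n) := fun t ht => by
    have := measure_ge_le_exp_neg_of_martingaleDifference ℱ hadp hint hbdd hmds ht L
    rwa [exp_neg, exp_log (by positivity), inv_div] at this
  refine ofReal_one_sub_le_measure hδ0.le (T := ⋃ j ∈ Finset.range (Nat.log 4 n + 1),
      (A (bernsteinGrid K j) ∪ A (-bernsteinGrid K j))) ?_ ?_
  · exact measure_biUnion_range_log_four_union_le (by omega) hδ0.le
      (fun j => hA _ (abs_bernsteinGrid_mul_le hK j))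
      (fun j => hA _ ((abs_neg (bernsteinGrid K j)).symm ▸ abs_bernsteinGrid_mul_le hK j))
  · filter_upwards [ae_sum_condExp_sq_le ℱ (fun i hi => (hint i hi).1) hbdd] with ω hV hω
    simp only [Set.mem_iUnion, Set.mem_union, not_exists, not_or, Set.mem_ofPred_eq, not_le,
      Finset.mem_range, A] at hω
    exact abs_le_of_forall_bernsteinGrid hK hL hV fun j hj =>
      abs_le_mul_add_div_of_mul_sub_lt (bernsteinGrid_pos hK j) (hω j (by omega)).1
        (hω j (by omega)).2
end

section
/- Let X and Y be real-valued, integrable random variables with E[X] = E[Y], and suppose X is stochastically optimistic for Y. Then −X is stochastically optimistic for −Y. -/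
/-! With equal means, stochastic optimism already gives `E φ(Y) ≤ E φ(X)` for every convex `φ`,
increasing or not; applied to `x ↦ u (-x)` this is the claim.

For convex `φ` and a point `m`, replace `φ` to the left of `m` by its tangent line at `m`, of slope
`c` the right derivative there. The result `T_m` satisfies `T_m ≤ φ`, agrees with `φ` on `[m, ∞)`,
and `T_m - c • id` is convex and increasing. Equal means cancel the linear part, so
`E T_m(Y) ≤ E T_m(X) ≤ E φ(X)`, and `E T_m(Y) → E φ(Y)` as `m → -∞` by dominated convergence:
for `m ≤ 0`, `T_m` lies between the tangent line at `0` and `φ`. -/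

open MeasureTheory

/-- `X` is stochastically optimistic for `Y`: `E[u(X)] ≥ E[u(Y)]` for every convex
increasing `u : ℝ → ℝ` for which both expectations exist. -/
def StochasticallyOptimistic {Ω : Type*} [MeasurableSpace Ω] (μ : Measure Ω)
    (X Y : Ω → ℝ) : Prop :=
  ∀ u : ℝ → ℝ, ConvexOn ℝ Set.univ u → Monotone u →
    Integrable (fun ω => u (X ω)) μ → Integrable (fun ω => u (Y ω)) μ →
    ∫ ω, u (Y ω) ∂μ ≤ ∫ ω, u (X ω) ∂μ

open Set Filter Topology

namespace ConvexOn

variable {φ : ℝ → ℝ}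

lemma monotone_rightDeriv (hφ : ConvexOn ℝ univ φ) :
    Monotone fun m => derivWithin φ (Ioi m) m := by
  simpa only [interior_univ, monotoneOn_univ] using hφ.monotoneOn_rightDeriv

lemma add_rightDeriv_mul_sub_le (hφ : ConvexOn ℝ univ φ) (m x : ℝ) :
    φ m + derivWithin φ (Ioi m) m * (x - m) ≤ φ x := by
  have hm : m ∈ interior univ := by simp
  rcases lt_trichotomy x m with hxm | rfl | hmx
  · have h := (hφ.slope_le_leftDeriv_of_mem_interior trivial hm hxm).trans
      (hφ.leftDeriv_le_rightDeriv_of_mem_interior hm)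
    rw [slope_def_field, div_le_iff₀ (sub_pos.2 hxm)] at h
    linarith
  · simp
  · have h := hφ.rightDeriv_le_slope_of_mem_interior hm trivial hmx
    rw [slope_def_field, le_div_iff₀ (sub_pos.2 hmx)] at h
    linarith

end ConvexOn

noncomputable def tangentTrunc (φ : ℝ → ℝ) (m x : ℝ) : ℝ :=
  φ (max x m) + derivWithin φ (Ioi m) m * (x - max x m)

section tangentTrunc

variable {φ : ℝ → ℝ} {m x : ℝ}

lemma tangentTrunc_of_le (h : m ≤ x) : tangentTrunc φ m x = φ x := by
  simp [tangentTrunc, max_eq_left h]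

lemma tangentTrunc_of_lt (h : x < m) :
    tangentTrunc φ m x = φ m + derivWithin φ (Ioi m) m * (x - m) := by
  simp [tangentTrunc, max_eq_right h.le]

lemma ConvexOn.tangentTrunc_le (hφ : ConvexOn ℝ univ φ) : tangentTrunc φ m x ≤ φ x := by
  rcases le_or_gt m x with h | h
  · exact (tangentTrunc_of_le h).le
  · exact (tangentTrunc_of_lt h).trans_le (hφ.add_rightDeriv_mul_sub_le m x)

lemma ConvexOn.add_rightDeriv_mul_sub_le_tangentTrunc (hφ : ConvexOn ℝ univ φ) {a : ℝ}
    (hma : m ≤ a) : φ a + derivWithin φ (Ioi a) a * (x - a) ≤ tangentTrunc φ m x := by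
  rcases le_or_gt m x with h | h
  · exact (tangentTrunc_of_le h).symm ▸ hφ.add_rightDeriv_mul_sub_le a x
  · rw [tangentTrunc_of_lt h]
    have hsupp := hφ.add_rightDeriv_mul_sub_le a m
    have hmono := hφ.monotone_rightDeriv hma
    nlinarith

lemma ConvexOn.continuous_tangentTrunc (hφ : ConvexOn ℝ univ φ) :
    Continuous (tangentTrunc φ m) := by
  have : Continuous φ := continuousOn_univ.1 (hφ.continuousOn isOpen_univ)
  unfold tangentTrunc
  fun_prop

lemma ConvexOn.monotoneOn_sub_rightDeriv_mul (hφ : ConvexOn ℝ univ φ) :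
    MonotoneOn (fun y => φ y - derivWithin φ (Ioi m) m * y) (Ici m) := by
  intro y hy z _ hyz
  have hsupp := hφ.add_rightDeriv_mul_sub_le y z
  have hmono := hφ.monotone_rightDeriv (show m ≤ y from hy)
  dsimp only
  nlinarith

lemma tangentTrunc_sub_rightDeriv_mul :
    (fun x => tangentTrunc φ m x - derivWithin φ (Ioi m) m * x) =
      (fun y => φ y - derivWithin φ (Ioi m) m * y) ∘ fun x => max x m := by
  ext x
  simp only [tangentTrunc, Function.comp]
  ring

lemma ConvexOn.monotone_tangentTrunc_sub_rightDeriv_mul (hφ : ConvexOn ℝ univ φ) :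
    Monotone fun x => tangentTrunc φ m x - derivWithin φ (Ioi m) m * x := by
  rw [tangentTrunc_sub_rightDeriv_mul]
  exact fun x y hxy => hφ.monotoneOn_sub_rightDeriv_mul (le_max_right x m) (le_max_right y m)
    (max_le_max_right m hxy)

lemma ConvexOn.convexOn_tangentTrunc_sub_rightDeriv_mul (hφ : ConvexOn ℝ univ φ) :
    ConvexOn ℝ univ fun x => tangentTrunc φ m x - derivWithin φ (Ioi m) m * x := by
  have himage : (fun x => max x m) '' univ = Ici m :=
    ext fun y => ⟨by rintro ⟨x, -, rfl⟩; exact le_max_right x m,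
      fun hy => ⟨y, trivial, max_eq_left hy⟩⟩
  rw [tangentTrunc_sub_rightDeriv_mul]
  refine ConvexOn.comp ?_ ((convexOn_id convex_univ).sup (convexOn_const m convex_univ)) ?_
  · rw [himage]
    exact (hφ.sub ((LinearMap.mul ℝ ℝ (derivWithin φ (Ioi m) m)).concaveOn convex_univ)).subset
      (subset_univ _) (convex_Ici m)
  · exact himage ▸ hφ.monotoneOn_sub_rightDeriv_mul

end tangentTrunc

namespace StochasticallyOptimistic

variable {Ω : Type*} [MeasurableSpace Ω] {μ : Measure Ω} {X Y : Ω → ℝ}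

lemma integral_add_mul_le (hso : StochasticallyOptimistic μ X Y) (hX : Integrable X μ)
    (hY : Integrable Y μ) (hmean : ∫ ω, X ω ∂μ = ∫ ω, Y ω ∂μ) {u : ℝ → ℝ}
    (hu : ConvexOn ℝ univ u) (hu_mono : Monotone u) (huX : Integrable (fun ω => u (X ω)) μ)
    (huY : Integrable (fun ω => u (Y ω)) μ) (c : ℝ) :
    ∫ ω, u (Y ω) + c * Y ω ∂μ ≤ ∫ ω, u (X ω) + c * X ω ∂μ := by
  rw [integral_add huX (hX.const_mul c), integral_add huY (hY.const_mul c), integral_const_mul,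
    integral_const_mul, hmean]
  linarith [hso u hu hu_mono huX huY]

end StochasticallyOptimistic

section Integral

variable {Ω : Type*} [MeasurableSpace Ω] {μ : Measure Ω} [IsFiniteMeasure μ] {φ : ℝ → ℝ}
  {Z : Ω → ℝ}

lemma ConvexOn.integrable_tangentTrunc_comp (hφ : ConvexOn ℝ univ φ) (hZ : Integrable Z μ)
    (hφZ : Integrable (fun ω => φ (Z ω)) μ) (m : ℝ) :
    Integrable (fun ω => tangentTrunc φ m (Z ω)) μ :=
  integrable_of_le_of_le
    (hφ.continuous_tangentTrunc.measurable.comp_aemeasurable hZ.aemeasurable).aestronglyMeasurable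
    (ae_of_all _ fun _ => hφ.add_rightDeriv_mul_sub_le_tangentTrunc le_rfl)
    (ae_of_all _ fun _ => hφ.tangentTrunc_le)
    ((integrable_const _).add ((hZ.sub (integrable_const m)).const_mul _)) hφZ

lemma ConvexOn.tendsto_integral_tangentTrunc_comp (hφ : ConvexOn ℝ univ φ) (hZ : Integrable Z μ)
    (hφZ : Integrable (fun ω => φ (Z ω)) μ) :
    Tendsto (fun m => ∫ ω, tangentTrunc φ m (Z ω) ∂μ) atBot (𝓝 (∫ ω, φ (Z ω) ∂μ)) := by
  set ℓ : ℝ → ℝ := fun x => φ 0 + derivWithin φ (Ioi 0) 0 * (x - 0)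
  refine tendsto_integral_filter_of_dominated_convergence (fun ω => |φ (Z ω)| + |ℓ (Z ω)|)
    (Eventually.of_forall fun m => (hφ.integrable_tangentTrunc_comp hZ hφZ m).aestronglyMeasurable)
    ?_ (hφZ.abs.add ((integrable_const _).add ((hZ.sub (integrable_const 0)).const_mul _)).abs)
    (ae_of_all _ fun ω => tendsto_const_nhds.congr' ?_)
  · filter_upwards [eventually_le_atBot 0] with m hm
    refine ae_of_all _ fun ω => abs_le.2 ⟨?_, ?_⟩
    · linarith [hφ.add_rightDeriv_mul_sub_le_tangentTrunc (x := Z ω) hm, neg_abs_le (ℓ (Z ω)),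
        abs_nonneg (φ (Z ω))]
    · linarith [hφ.tangentTrunc_le (m := m) (x := Z ω), le_abs_self (φ (Z ω)),
        abs_nonneg (ℓ (Z ω))]
  · filter_upwards [eventually_le_atBot (Z ω)] with m hm
    exact (tangentTrunc_of_le hm).symm

end Integral

theorem StochasticallyOptimistic.integral_le_of_convexOn {Ω : Type*} [MeasurableSpace Ω]
    {μ : Measure Ω} [IsFiniteMeasure μ] {X Y : Ω → ℝ} (hso : StochasticallyOptimistic μ X Y)
    (hX : Integrable X μ) (hY : Integrable Y μ) (hmean : ∫ ω, X ω ∂μ = ∫ ω, Y ω ∂μ)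
    {φ : ℝ → ℝ} (hφ : ConvexOn ℝ univ φ) (hφX : Integrable (fun ω => φ (X ω)) μ)
    (hφY : Integrable (fun ω => φ (Y ω)) μ) :
    ∫ ω, φ (Y ω) ∂μ ≤ ∫ ω, φ (X ω) ∂μ := by
  refine le_of_tendsto' (hφ.tendsto_integral_tangentTrunc_comp hY hφY) fun m => ?_
  set c := derivWithin φ (Ioi m) m
  have hTX := hφ.integrable_tangentTrunc_comp hX hφX m
  have hTY := hφ.integrable_tangentTrunc_comp hY hφY m
  calc ∫ ω, tangentTrunc φ m (Y ω) ∂μ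
      = ∫ ω, (tangentTrunc φ m (Y ω) - c * Y ω) + c * Y ω ∂μ := by simp only [sub_add_cancel]
    _ ≤ ∫ ω, (tangentTrunc φ m (X ω) - c * X ω) + c * X ω ∂μ :=
        hso.integral_add_mul_le hX hY hmean hφ.convexOn_tangentTrunc_sub_rightDeriv_mul
          hφ.monotone_tangentTrunc_sub_rightDeriv_mul (hTX.sub (hX.const_mul c))
          (hTY.sub (hY.const_mul c)) c
    _ = ∫ ω, tangentTrunc φ m (X ω) ∂μ := by simp only [sub_add_cancel]
    _ ≤ ∫ ω, φ (X ω) ∂μ := integral_mono hTX hφX fun _ => hφ.tangentTrunc_le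

/-- If `E[X] = E[Y]` and `X ⪰_so Y`, then `-X ⪰_so -Y` (Lemma `negso` of the paper). -/
theorem stmt_16 {Ω : Type*} [MeasurableSpace Ω] (μ : Measure Ω) [IsProbabilityMeasure μ]
    (X Y : Ω → ℝ) (hX : Integrable X μ) (hY : Integrable Y μ)
    (hmean : ∫ ω, X ω ∂μ = ∫ ω, Y ω ∂μ)
    (hso : StochasticallyOptimistic μ X Y) :
    StochasticallyOptimistic μ (fun ω => -X ω) (fun ω => -Y ω) :=
  fun _ hu _ huX huY =>
    hso.integral_le_of_convexOn hX hY hmean (hu.comp_linearMap (-LinearMap.id)) huX huY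
end

section
/- Let Y be a real-valued random variable with mean μ, let σ > 0, and suppose that a Gaussian random variable X with mean μ and variance σ² is stochastically optimistic for Y. Then for every ρ ∈ (0,1), Pr( |Y − μ| ≤ √( 2·σ²·log(2/ρ) ) ) ≥ 1 − ρ. -/
open MeasureTheory ProbabilityTheory Real
open scoped NNReal ENNReal

/-- Stochastic optimism at the level of laws on `ℝ`: a random variable with law `ν₁` is
stochastically optimistic for one with law `ν₂` if `∫ u dν₁ ≥ ∫ u dν₂` for every convex
increasing `u : ℝ → ℝ` for which both integrals exist. -/
def StochOptLaw (ν₁ ν₂ : Measure ℝ) : Prop :=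
  ∀ u : ℝ → ℝ, ConvexOn ℝ Set.univ u → Monotone u →
    Integrable u ν₁ → Integrable u ν₂ →
    ∫ x, u x ∂ν₂ ≤ ∫ x, u x ∂ν₁

section AuxStmt17

lemma aux_tilt (m t x : ℝ) {v : ℝ≥0} (hv : v ≠ 0) :
    rexp (t * x) * gaussianPDFReal m v x
      = rexp (t * m + t ^ 2 * v / 2) * gaussianPDFReal (m + t * v) v x := by
  have hv' : (0:ℝ) < v := lt_of_le_of_ne v.2 (by exact_mod_cast (Ne.symm hv))
  simp only [gaussianPDFReal]
  rw [mul_left_comm, mul_left_comm (rexp (t * m + t ^ 2 * v / 2)), ← Real.exp_add,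
    ← Real.exp_add]
  congr 2
  field_simp
  ring

lemma aux_lint_exp (m t : ℝ) {v : ℝ≥0} (hv : v ≠ 0) :
    ∫⁻ x, ENNReal.ofReal (rexp (t * x)) ∂(gaussianReal m v)
      = ENNReal.ofReal (rexp (t * m + t ^ 2 * v / 2)) := by
  rw [gaussianReal_of_var_ne_zero m hv,
    lintegral_withDensity_eq_lintegral_mul _ (measurable_gaussianPDF m v)
      ((measurable_const_mul t).exp.ennreal_ofReal)]
  have : ∀ x : ℝ, (gaussianPDF m v * fun x => ENNReal.ofReal (rexp (t * x))) x
      = ENNReal.ofReal (rexp (t * m + t ^ 2 * v / 2))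
        * ENNReal.ofReal (gaussianPDFReal (m + t * v) v x) := by
    intro x
    simp only [Pi.mul_apply, gaussianPDF]
    rw [← ENNReal.ofReal_mul (gaussianPDFReal_nonneg m v x), mul_comm,
      aux_tilt m t x hv, ENNReal.ofReal_mul (exp_nonneg _)]
  simp only [this]
  rw [lintegral_const_mul _ (measurable_gaussianPDFReal _ _).ennreal_ofReal]
  have h1 := lintegral_gaussianPDFReal_eq_one (m + t * v) hv
  rw [h1, mul_one]

lemma aux_integrable_exp (m t : ℝ) {v : ℝ≥0} (hv : v ≠ 0) :
    Integrable (fun x => rexp (t * x)) (gaussianReal m v) := by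
  rw [gaussianReal_of_var_ne_zero m hv,
    integrable_withDensity_iff (measurable_gaussianPDF m v)
      (ae_of_all _ fun x => ENNReal.ofReal_lt_top)]
  have : (fun x => rexp (t * x) * (gaussianPDF m v x).toReal)
      = fun x => rexp (t * m + t ^ 2 * v / 2) * gaussianPDFReal (m + t * v) v x := by
    ext x
    rw [gaussianPDF, ENNReal.toReal_ofReal (gaussianPDFReal_nonneg m v x), aux_tilt m t x hv]
  rw [this]
  exact (integrable_gaussianPDFReal _ _).const_mul _

lemma aux_integrable_id (m : ℝ) {v : ℝ≥0} (hv : v ≠ 0) :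
    Integrable (fun x : ℝ => x) (gaussianReal m v) := by
  have h := (aux_integrable_exp m 1 hv).add (aux_integrable_exp m (-1) hv)
  refine h.mono measurable_id.aestronglyMeasurable (ae_of_all _ fun x => ?_)
  simp only [norm_eq_abs]
  have h1 : |x| + 1 ≤ rexp |x| := Real.add_one_le_exp |x|
  have h2 : rexp |x| ≤ rexp (1 * x) + rexp (-1 * x) := by
    rcases abs_cases x with ⟨h, _⟩ | ⟨h, _⟩
    · rw [h]
      simpa using (Real.exp_pos (-x)).le
    · rw [h]
      simpa using (Real.exp_pos x).le
  have h3 : (0:ℝ) ≤ rexp (1 * x) + rexp (-1 * x) := by positivity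
  simp only [Pi.add_apply]
  rw [abs_of_nonneg h3]
  linarith

lemma aux_map_refl (m : ℝ) (v : ℝ≥0) :
    (gaussianReal m v).map (fun x => -x + 2 * m) = gaussianReal m v := by
  have h1 : (gaussianReal m v).map (fun x => (-1 : ℝ) * x)
      = gaussianReal (-m) v := by
    rw [gaussianReal_map_const_mul (-1 : ℝ)]
    congr 1
    · ring
    · ext
      norm_num
  have h2 : ((gaussianReal (-m) v)).map (· + 2 * m) = gaussianReal m v := by
    rw [gaussianReal_map_add_const]
    congr 1
    ring
  have hc : (fun x : ℝ => -x + 2 * m) = (fun x : ℝ => x + 2 * m) ∘ (fun x : ℝ => -1 * x) := by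
    ext x
    simp only [Function.comp_apply]
    ring
  rw [hc, ← Measure.map_map (by fun_prop) (by fun_prop), h1, h2]

lemma aux_mean (m : ℝ) {v : ℝ≥0} (hv : v ≠ 0) :
    ∫ x, x ∂(gaussianReal m v) = m := by
  have hint := aux_integrable_id m hv
  have h : ∫ x, x ∂(gaussianReal m v) = ∫ x, (-x + 2 * m) ∂(gaussianReal m v) := by
    conv_lhs => rw [← aux_map_refl m v]
    exact integral_map (by fun_prop) (f := fun x : ℝ => x) aestronglyMeasurable_id
  have h2 : ∫ x, (-x + 2 * m) ∂(gaussianReal m v)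
      = -∫ x, x ∂(gaussianReal m v) + 2 * m := by
    have hneg : Integrable (fun x : ℝ => -x) (gaussianReal m v) := hint.neg
    rw [integral_add hneg (integrable_const _), integral_neg, integral_const]
    simp
  rw [h2] at h
  linarith

lemma aux_gamma_neg (t z s : ℝ) :
    ENNReal.ofReal (t ^ 2 * rexp (-(t * (s + z))) * max s 0)
      = ENNReal.ofReal (rexp (-(t * z))) * gammaPDF 2 t s := by
  rcases le_or_gt 0 s with h | h
  · rw [gammaPDF_of_nonneg h, Real.Gamma_two, ← ENNReal.ofReal_mul (exp_nonneg _)]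
    congr 1
    rw [max_eq_left h, show ((2:ℝ) - 1) = 1 by norm_num, Real.rpow_one, div_one, Real.rpow_two,
      show -(t * (s + z)) = -(t * z) + -(t * s) by ring, Real.exp_add]
    ring
  · rw [gammaPDF_of_neg h, mul_zero, max_eq_right h.le, mul_zero, ENNReal.ofReal_zero]

lemma aux_gamma_pos (t z s : ℝ) :
    ENNReal.ofReal (t ^ 2 * rexp (t * (z - s)) * max s 0)
      = ENNReal.ofReal (rexp (t * z)) * gammaPDF 2 t s := by
  rcases le_or_gt 0 s with h | h
  · rw [gammaPDF_of_nonneg h, Real.Gamma_two, ← ENNReal.ofReal_mul (exp_nonneg _)]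
    congr 1
    rw [max_eq_left h, show ((2:ℝ) - 1) = 1 by norm_num, Real.rpow_one, div_one, Real.rpow_two,
      show t * (z - s) = t * z + -(t * s) by ring, Real.exp_add]
    ring
  · rw [gammaPDF_of_neg h, mul_zero, max_eq_right h.le, mul_zero, ENNReal.ofReal_zero]

lemma aux_mix_neg (t z : ℝ) (ht : 0 < t) :
    ∫⁻ a, ENNReal.ofReal (t ^ 2 * rexp (-(t * a)) * max (a - z) 0)
      = ENNReal.ofReal (rexp (-(t * z))) := by
  have hrw : ∀ a : ℝ, ENNReal.ofReal (t ^ 2 * rexp (-(t * a)) * max (a - z) 0)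
      = ENNReal.ofReal (rexp (-(t * z))) * gammaPDF 2 t (a - z) := by
    intro a
    rw [show -(t * a) = -(t * ((a - z) + z)) by ring]
    exact aux_gamma_neg t z (a - z)
  simp_rw [hrw]
  have hm : Measurable (fun a : ℝ => gammaPDF 2 t (a - z)) :=
    ((measurable_gammaPDFReal 2 t).ennreal_ofReal).comp (measurable_id.sub_const z)
  rw [lintegral_const_mul _ hm, lintegral_sub_right_eq_self (gammaPDF 2 t) z,
    lintegral_gammaPDF_eq_one (by norm_num) ht, mul_one]

lemma aux_mix_pos (t z : ℝ) (ht : 0 < t) :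
    ∫⁻ a, ENNReal.ofReal (t ^ 2 * rexp (t * a) * max (z - a) 0)
      = ENNReal.ofReal (rexp (t * z)) := by
  have hrw : ∀ a : ℝ, ENNReal.ofReal (t ^ 2 * rexp (t * a) * max (z - a) 0)
      = ENNReal.ofReal (rexp (t * z)) * gammaPDF 2 t (z - a) := by
    intro a
    rw [show t * a = t * (z - (z - a)) by ring]
    exact aux_gamma_pos t z (z - a)
  simp_rw [hrw]
  have hm : Measurable (fun a : ℝ => gammaPDF 2 t (z - a)) :=
    ((measurable_gammaPDFReal 2 t).ennreal_ofReal).comp (measurable_const.sub measurable_id)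
  rw [lintegral_const_mul _ hm]
  have h1 : ∫⁻ a, gammaPDF 2 t (z - a) = ∫⁻ a, gammaPDF 2 t a := by
    simp_rw [sub_eq_add_neg]
    have h2 : ∫⁻ a : ℝ, (fun b : ℝ => gammaPDF 2 t (z + b)) (-a) ∂volume
        = ∫⁻ b, gammaPDF 2 t (z + b) ∂volume :=
      (Measure.measurePreserving_neg (volume : Measure ℝ)).lintegral_comp
        (((measurable_gammaPDFReal 2 t).ennreal_ofReal).comp (measurable_const_add z))
    simp only at h2
    rw [h2, lintegral_add_left_eq_self (gammaPDF 2 t) z]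
  rw [h1, lintegral_gammaPDF_eq_one (by norm_num) ht, mul_one]

lemma aux_key_pos (ν γ : Measure ℝ) [SigmaFinite ν] [SigmaFinite γ] (t : ℝ) (ht : 0 < t)
    (h : ∀ a : ℝ, (∫⁻ y, ENNReal.ofReal (max (y - a) 0) ∂ν)
      ≤ ∫⁻ x, ENNReal.ofReal (max (x - a) 0) ∂γ) :
    (∫⁻ y, ENNReal.ofReal (rexp (t * y)) ∂ν) ≤ ∫⁻ x, ENNReal.ofReal (rexp (t * x)) ∂γ := by
  have repr : ∀ (κ : Measure ℝ) [SigmaFinite κ],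
      ∫⁻ y, ENNReal.ofReal (rexp (t * y)) ∂κ
        = ∫⁻ a, ENNReal.ofReal (t ^ 2 * rexp (t * a))
            * ∫⁻ y, ENNReal.ofReal (max (y - a) 0) ∂κ ∂volume := by
    intro κ hκ
    have hmeas : AEMeasurable (Function.uncurry
        (fun y a : ℝ => ENNReal.ofReal (t ^ 2 * rexp (t * a) * max (y - a) 0)))
        (κ.prod volume) := by
      refine Measurable.aemeasurable ?_
      refine Measurable.ennreal_ofReal ?_
      exact (measurable_const.mul (measurable_snd.const_mul t).exp).mul
        ((measurable_fst.sub measurable_snd).max measurable_const)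
    calc ∫⁻ y, ENNReal.ofReal (rexp (t * y)) ∂κ
        = ∫⁻ y, ∫⁻ a, ENNReal.ofReal (t ^ 2 * rexp (t * a) * max (y - a) 0) ∂volume ∂κ :=
          lintegral_congr fun y => (aux_mix_pos t y ht).symm
      _ = ∫⁻ a, ∫⁻ y, ENNReal.ofReal (t ^ 2 * rexp (t * a) * max (y - a) 0) ∂κ ∂volume :=
          lintegral_lintegral_swap hmeas
      _ = ∫⁻ a, ENNReal.ofReal (t ^ 2 * rexp (t * a))
            * ∫⁻ y, ENNReal.ofReal (max (y - a) 0) ∂κ ∂volume := by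
          refine lintegral_congr fun a => ?_
          have hm : Measurable (fun y : ℝ => ENNReal.ofReal (max (y - a) 0)) :=
            ((measurable_id.sub_const a).max measurable_const).ennreal_ofReal
          rw [← lintegral_const_mul _ hm]
          exact lintegral_congr fun y => by
            rw [← ENNReal.ofReal_mul (by positivity)]
  rw [repr ν, repr γ]
  exact lintegral_mono fun a => mul_le_mul_right (h a) _

lemma aux_key_neg (ν γ : Measure ℝ) [SigmaFinite ν] [SigmaFinite γ] (t : ℝ) (ht : 0 < t)
    (h : ∀ a : ℝ, (∫⁻ y, ENNReal.ofReal (max (a - y) 0) ∂ν)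
      ≤ ∫⁻ x, ENNReal.ofReal (max (a - x) 0) ∂γ) :
    (∫⁻ y, ENNReal.ofReal (rexp (-(t * y))) ∂ν)
      ≤ ∫⁻ x, ENNReal.ofReal (rexp (-(t * x))) ∂γ := by
  have repr : ∀ (κ : Measure ℝ) [SigmaFinite κ],
      ∫⁻ y, ENNReal.ofReal (rexp (-(t * y))) ∂κ
        = ∫⁻ a, ENNReal.ofReal (t ^ 2 * rexp (-(t * a)))
            * ∫⁻ y, ENNReal.ofReal (max (a - y) 0) ∂κ ∂volume := by
    intro κ hκ
    have hmeas : AEMeasurable (Function.uncurry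
        (fun y a : ℝ => ENNReal.ofReal (t ^ 2 * rexp (-(t * a)) * max (a - y) 0)))
        (κ.prod volume) := by
      refine Measurable.aemeasurable ?_
      refine Measurable.ennreal_ofReal ?_
      exact (measurable_const.mul (measurable_snd.const_mul t).neg.exp).mul
        ((measurable_snd.sub measurable_fst).max measurable_const)
    calc ∫⁻ y, ENNReal.ofReal (rexp (-(t * y))) ∂κ
        = ∫⁻ y, ∫⁻ a, ENNReal.ofReal (t ^ 2 * rexp (-(t * a)) * max (a - y) 0) ∂volume ∂κ :=
          lintegral_congr fun y => (aux_mix_neg t y ht).symm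
      _ = ∫⁻ a, ∫⁻ y, ENNReal.ofReal (t ^ 2 * rexp (-(t * a)) * max (a - y) 0) ∂κ ∂volume :=
          lintegral_lintegral_swap hmeas
      _ = ∫⁻ a, ENNReal.ofReal (t ^ 2 * rexp (-(t * a)))
            * ∫⁻ y, ENNReal.ofReal (max (a - y) 0) ∂κ ∂volume := by
          refine lintegral_congr fun a => ?_
          have hm : Measurable (fun y : ℝ => ENNReal.ofReal (max (a - y) 0)) :=
            ((measurable_const.sub measurable_id).max measurable_const).ennreal_ofReal
          rw [← lintegral_const_mul _ hm]
          exact lintegral_congr fun y => by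
            rw [← ENNReal.ofReal_mul (by positivity)]
  rw [repr ν, repr γ]
  exact lintegral_mono fun a => mul_le_mul_right (h a) _


end AuxStmt17

/-- Concentration from Gaussian stochastic optimism (Corollary `soconc1` of the paper). -/
theorem stmt_17 {Ω : Type*} [MeasurableSpace Ω] (μ : Measure Ω) [IsProbabilityMeasure μ]
    (Y : Ω → ℝ) (hYm : Measurable Y) (hY : Integrable Y μ)
    (μm σ : ℝ) (hσ : 0 < σ) (hmean : ∫ ω, Y ω ∂μ = μm)
    (hso : StochOptLaw (gaussianReal μm ⟨σ ^ 2, sq_nonneg σ⟩) (μ.map Y))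
    (ρ : ℝ) (hρ : ρ ∈ Set.Ioo (0 : ℝ) 1) :
    ENNReal.ofReal (1 - ρ) ≤
      μ {ω | |Y ω - μm| ≤ Real.sqrt (2 * σ ^ 2 * Real.log (2 / ρ))} := by
  obtain ⟨hρ0, hρ1⟩ := hρ
  have hσ2 : (0:ℝ) < σ ^ 2 := by positivity
  set v : ℝ≥0 := ⟨σ ^ 2, sq_nonneg σ⟩ with hvdef
  have hvcoe : (v : ℝ) = σ ^ 2 := rfl
  have hv : v ≠ 0 := by
    intro hcon
    have h0 : (v : ℝ) = 0 := by rw [hcon]; rfl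
    rw [hvcoe] at h0
    nlinarith
  set γ := gaussianReal μm v with hγdef
  set ν := μ.map Y with hνdef
  have hνprob : IsProbabilityMeasure ν := Measure.isProbabilityMeasure_map hYm.aemeasurable
  -- basic integrability
  have hid_ν : Integrable (fun x : ℝ => x) ν := by
    rw [hνdef]
    exact (integrable_map_measure aestronglyMeasurable_id hYm.aemeasurable).2 hY
  have hid_γ : Integrable (fun x : ℝ => x) γ := aux_integrable_id μm hv
  have hmean_ν : ∫ y, y ∂ν = μm := by
    rw [hνdef]
    have h := integral_map (μ := μ) (φ := Y) hYm.aemeasurable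
      (f := fun x : ℝ => x) aestronglyMeasurable_id
    exact h.trans hmean
  have hmean_γ : ∫ x, x ∂γ = μm := aux_mean μm hv
  -- hinge inequalities
  have hint_ν : ∀ a : ℝ, Integrable (fun x : ℝ => max (x - a) 0) ν := fun a =>
    (hid_ν.sub (integrable_const a)).pos_part
  have hint_γ : ∀ a : ℝ, Integrable (fun x : ℝ => max (x - a) 0) γ := fun a =>
    (hid_γ.sub (integrable_const a)).pos_part
  have hinge : ∀ a : ℝ, (∫ y, max (y - a) 0 ∂ν) ≤ ∫ x, max (x - a) 0 ∂γ := by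
    intro a
    have hconv : ConvexOn ℝ Set.univ (fun x : ℝ => max (x - a) 0) := by
      have h1 : ConvexOn ℝ Set.univ (fun x : ℝ => x - a) :=
        ⟨convex_univ, fun x _ y _ p q hp hq hpq => by
          simp only [smul_eq_mul]
          exact le_of_eq (by linear_combination a * hpq)⟩
      have h2 : ConvexOn ℝ Set.univ (fun _ : ℝ => (0:ℝ)) := convexOn_const 0 convex_univ
      exact h1.sup h2
    have hmono : Monotone (fun x : ℝ => max (x - a) 0) := fun x y hxy =>
      max_le_max (by linarith) le_rfl
    exact hso _ hconv hmono (hint_γ a) (hint_ν a)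
  have hmaxid : ∀ a x : ℝ, max (a - x) 0 = max (x - a) 0 - x + a := by
    intro a x
    rcases le_total a x with h | h
    · rw [max_eq_right (by linarith), max_eq_left (by linarith)]
      ring
    · rw [max_eq_left (by linarith), max_eq_right (by linarith)]
      ring
  have hingeneg : ∀ a : ℝ, (∫ y, max (a - y) 0 ∂ν) ≤ ∫ x, max (a - x) 0 ∂γ := by
    intro a
    have hκ : ∀ (κ : Measure ℝ), IsProbabilityMeasure κ →
        Integrable (fun x : ℝ => x) κ →
        ∫ x, max (a - x) 0 ∂κ = (∫ x, max (x - a) 0 ∂κ) - (∫ x, x ∂κ) + a := by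
      intro κ hκp hκi
      have : ∀ x : ℝ, max (a - x) 0 = max (x - a) 0 - x + a := hmaxid a
      have i2 : Integrable (fun x : ℝ => max (x - a) 0) κ :=
        (hκi.sub (integrable_const a)).pos_part
      have i3 : Integrable (fun x : ℝ => max (x - a) 0 - x) κ := i2.sub hκi
      rw [integral_congr_ae (ae_of_all _ this), integral_add i3 (integrable_const a),
        integral_sub i2 hκi, integral_const]
      simp
    rw [hκ ν hνprob hid_ν, hκ γ inferInstance hid_γ, hmean_ν, hmean_γ]
    have := hinge a
    linarith
  -- lintegral versions
  have hingeL : ∀ a : ℝ, (∫⁻ y, ENNReal.ofReal (max (y - a) 0) ∂ν)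
      ≤ ∫⁻ x, ENNReal.ofReal (max (x - a) 0) ∂γ := by
    intro a
    rw [← ofReal_integral_eq_lintegral_ofReal (hint_ν a) (ae_of_all _ fun x => le_max_right _ _),
      ← ofReal_integral_eq_lintegral_ofReal (hint_γ a) (ae_of_all _ fun x => le_max_right _ _)]
    exact ENNReal.ofReal_le_ofReal (hinge a)
  have hint_ν' : ∀ a : ℝ, Integrable (fun x : ℝ => max (a - x) 0) ν := by
    intro a
    have : (fun x : ℝ => max (a - x) 0) = fun x : ℝ => max (x - a) 0 - x + a := by
      ext x; exact hmaxid a x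
    rw [this]
    exact ((hint_ν a).sub hid_ν).add (integrable_const a)
  have hint_γ' : ∀ a : ℝ, Integrable (fun x : ℝ => max (a - x) 0) γ := by
    intro a
    have : (fun x : ℝ => max (a - x) 0) = fun x : ℝ => max (x - a) 0 - x + a := by
      ext x; exact hmaxid a x
    rw [this]
    exact ((hint_γ a).sub hid_γ).add (integrable_const a)
  have hingenegL : ∀ a : ℝ, (∫⁻ y, ENNReal.ofReal (max (a - y) 0) ∂ν)
      ≤ ∫⁻ x, ENNReal.ofReal (max (a - x) 0) ∂γ := by
    intro a
    rw [← ofReal_integral_eq_lintegral_ofReal (hint_ν' a) (ae_of_all _ fun x => le_max_right _ _),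
      ← ofReal_integral_eq_lintegral_ofReal (hint_γ' a) (ae_of_all _ fun x => le_max_right _ _)]
    exact ENNReal.ofReal_le_ofReal (hingeneg a)
  -- the deviation parameter
  have h2ρ : (1:ℝ) < 2 / ρ := by
    rw [lt_div_iff₀ hρ0]
    linarith
  have hlog : 0 < Real.log (2 / ρ) := Real.log_pos h2ρ
  set t := Real.sqrt (2 * σ ^ 2 * Real.log (2 / ρ)) with htdef
  have ht2 : t ^ 2 = 2 * σ ^ 2 * Real.log (2 / ρ) := Real.sq_sqrt (by positivity)
  have ht0 : 0 < t := Real.sqrt_pos.2 (by positivity)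
  set l := t / σ ^ 2 with hldef
  have hl0 : 0 < l := by positivity
  have hρ2 : (0:ℝ) < ρ / 2 := by linarith
  have hexplog : rexp (Real.log (ρ / 2)) = ρ / 2 := Real.exp_log hρ2
  have hloghalf : Real.log (ρ / 2) = - Real.log (2 / ρ) := by
    rw [show ρ / 2 = (2 / ρ)⁻¹ by field_simp, Real.log_inv]
  -- upper tail
  have hub : (∫⁻ y, ENNReal.ofReal (rexp (l * y)) ∂ν)
      ≤ ENNReal.ofReal (rexp (l * μm + l ^ 2 * σ ^ 2 / 2)) := by
    refine (aux_key_pos ν γ l hl0 hingeL).trans_eq ?_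
    rw [hγdef, aux_lint_exp μm l hv, hvcoe]
  have hkey_up : rexp (l * μm + l ^ 2 * σ ^ 2 / 2) = rexp (l * (μm + t)) * (ρ / 2) := by
    rw [← hexplog, ← Real.exp_add]
    congr 1
    have hlogt : Real.log (2 / ρ) = t ^ 2 / (2 * σ ^ 2) := by
      rw [ht2]
      field_simp
    rw [hloghalf, hlogt, hldef]
    field_simp
    ring
  have hS1 : ν {x : ℝ | μm + t ≤ x} ≤ ENNReal.ofReal (ρ / 2) := by
    set c := ENNReal.ofReal (rexp (l * (μm + t))) with hcdef
    have hc0 : c ≠ 0 := by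
      rw [hcdef]
      simp [Real.exp_pos]
    have hctop : c ≠ ⊤ := ENNReal.ofReal_ne_top
    refine (ENNReal.mul_le_mul_iff_right hc0 hctop).1 ?_
    calc c * ν {x : ℝ | μm + t ≤ x}
        ≤ c * ν {x : ℝ | c ≤ ENNReal.ofReal (rexp (l * x))} := by
          refine mul_le_mul_right (measure_mono fun x hx => ?_) c
          exact ENNReal.ofReal_le_ofReal (Real.exp_le_exp.2
            (mul_le_mul_of_nonneg_left hx hl0.le))
      _ ≤ ∫⁻ x, ENNReal.ofReal (rexp (l * x)) ∂ν :=
          mul_meas_ge_le_lintegral₀ ((measurable_const_mul l).exp.ennreal_ofReal.aemeasurable) c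
      _ ≤ ENNReal.ofReal (rexp (l * μm + l ^ 2 * σ ^ 2 / 2)) := hub
      _ = c * ENNReal.ofReal (ρ / 2) := by
          rw [hkey_up, ENNReal.ofReal_mul (exp_nonneg _)]
  -- lower tail
  have hlb : (∫⁻ y, ENNReal.ofReal (rexp (-(l * y))) ∂ν)
      ≤ ENNReal.ofReal (rexp (-(l * μm) + l ^ 2 * σ ^ 2 / 2)) := by
    refine (aux_key_neg ν γ l hl0 hingenegL).trans_eq ?_
    have h := aux_lint_exp μm (-l) hv
    simp_rw [neg_mul] at h
    rw [hγdef, h, hvcoe]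
    congr 2
    ring
  have hkey_lo : rexp (-(l * μm) + l ^ 2 * σ ^ 2 / 2) = rexp (-(l * (μm - t))) * (ρ / 2) := by
    rw [← hexplog, ← Real.exp_add]
    congr 1
    have hlogt : Real.log (2 / ρ) = t ^ 2 / (2 * σ ^ 2) := by
      rw [ht2]
      field_simp
    rw [hloghalf, hlogt, hldef]
    field_simp
    ring
  have hS2 : ν {x : ℝ | x ≤ μm - t} ≤ ENNReal.ofReal (ρ / 2) := by
    set c := ENNReal.ofReal (rexp (-(l * (μm - t)))) with hcdef
    have hc0 : c ≠ 0 := by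
      rw [hcdef]
      simp [Real.exp_pos]
    have hctop : c ≠ ⊤ := ENNReal.ofReal_ne_top
    refine (ENNReal.mul_le_mul_iff_right hc0 hctop).1 ?_
    calc c * ν {x : ℝ | x ≤ μm - t}
        ≤ c * ν {x : ℝ | c ≤ ENNReal.ofReal (rexp (-(l * x)))} := by
          refine mul_le_mul_right (measure_mono fun x hx => ?_) c
          refine ENNReal.ofReal_le_ofReal (Real.exp_le_exp.2 ?_)
          have := mul_le_mul_of_nonneg_left hx hl0.le
          linarith
      _ ≤ ∫⁻ x, ENNReal.ofReal (rexp (-(l * x))) ∂ν :=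
          mul_meas_ge_le_lintegral₀
            ((measurable_const_mul l).neg.exp.ennreal_ofReal.aemeasurable) c
      _ ≤ ENNReal.ofReal (rexp (-(l * μm) + l ^ 2 * σ ^ 2 / 2)) := hlb
      _ = c * ENNReal.ofReal (ρ / 2) := by
          rw [hkey_lo, ENNReal.ofReal_mul (exp_nonneg _)]
  -- assembling
  have hA : MeasurableSet {ω | |Y ω - μm| ≤ t} :=
    measurableSet_le (hYm.sub measurable_const).abs measurable_const
  have hcompl : μ {ω | |Y ω - μm| ≤ t}ᶜ ≤ ENNReal.ofReal ρ := by
    have hsub : {ω | |Y ω - μm| ≤ t}ᶜ ⊆ {ω | μm + t ≤ Y ω} ∪ {ω | Y ω ≤ μm - t} := by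
      intro ω hω
      simp only [Set.mem_compl_iff, Set.mem_setOf_eq, not_le] at hω
      rcases abs_cases (Y ω - μm) with ⟨heq, _⟩ | ⟨heq, _⟩
      · left
        simp only [Set.mem_setOf_eq]
        rw [heq] at hω
        linarith
      · right
        simp only [Set.mem_setOf_eq]
        rw [heq] at hω
        linarith
    have hms1 : MeasurableSet {x : ℝ | μm + t ≤ x} := measurableSet_Ici
    have hms2 : MeasurableSet {x : ℝ | x ≤ μm - t} := measurableSet_Iic
    have h1 : μ {ω | μm + t ≤ Y ω} = ν {x : ℝ | μm + t ≤ x} := by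
      rw [hνdef, Measure.map_apply hYm hms1]
      rfl
    have h2 : μ {ω | Y ω ≤ μm - t} = ν {x : ℝ | x ≤ μm - t} := by
      rw [hνdef, Measure.map_apply hYm hms2]
      rfl
    calc μ {ω | |Y ω - μm| ≤ t}ᶜ
        ≤ μ ({ω | μm + t ≤ Y ω} ∪ {ω | Y ω ≤ μm - t}) := measure_mono hsub
      _ ≤ μ {ω | μm + t ≤ Y ω} + μ {ω | Y ω ≤ μm - t} := measure_union_le _ _
      _ ≤ ENNReal.ofReal (ρ / 2) + ENNReal.ofReal (ρ / 2) := by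
          rw [h1, h2]
          exact add_le_add hS1 hS2
      _ = ENNReal.ofReal ρ := by
          rw [← ENNReal.ofReal_add (by linarith) (by linarith)]
          norm_num
  calc ENNReal.ofReal (1 - ρ) = 1 - ENNReal.ofReal ρ := by
        rw [ENNReal.ofReal_sub 1 hρ0.le, ENNReal.ofReal_one]
    _ ≤ 1 - μ {ω | |Y ω - μm| ≤ t}ᶜ := tsub_le_tsub_left hcompl 1
    _ = μ {ω | |Y ω - μm| ≤ t} := by
        rw [prob_compl_eq_one_sub hA, ENNReal.sub_sub_cancel ENNReal.one_ne_top prob_le_one]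
end
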